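/- arXiv:2504.21816 — 9 statements merged into one kernel-verified Lean document; each statement's English description precedes it below -/
import Mathlib

section
/- Let A = F_1^{μ_1} × ⋯ × F_λ^{μ_λ} ⊆ F_q^m where F_1 ⊊ ⋯ ⊊ F_λ ⊆ F_q are nested subfields of F_q. A map φ: A → A lies in the affine group Aff(A) (i.e., φ is the restriction to A of an affine map X ↦ AX + b of F_q^m with φ(A) = A) if and only if b ∈ A and A is an invertible block lower triangular matrix whose (i,j) entry a_{i,j} lies in F_{t_i} whenever s_{t_i−1} < i ≤ s_{t_i}, and a_{i,j} = 0 for j > s_{t_i}. -/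
/-- The Cartesian product set `A = ∏ i, K (tk i) ⊆ F^m` determined by the nested subfields
`K` and the block assignment `tk` of coordinates. -/
def cartSet (F : Type*) [Field F] {m L : ℕ} (K : Fin L → Subfield F) (tk : Fin m → Fin L) :
    Set (Fin m → F) :=
  {x | ∀ i, x i ∈ K (tk i)}

/-- Characterization of the affine group Aff(A) for a product of nested subfields:
an invertible affine map `X ↦ M X + b` restricts to a bijection of `A` if and only if
`b ∈ A` and `M` is block lower triangular with row entries in the corresponding subfields. -/
theorem mem_affine_group_iff
    (F : Type*) [Field F] [Fintype F]
    (L m : ℕ) (K : Fin L → Subfield F)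
    (hK : ∀ t t' : Fin L, t < t' → K t < K t')
    (μ : Fin L → ℕ) (hμ : ∀ t, 1 ≤ μ t)
    (s : ℕ → ℕ) (hs0 : s 0 = 0) (hsrec : ∀ t : Fin L, s ((t : ℕ) + 1) = s (t : ℕ) + μ t)
    (hm : m = s L)
    (tk : Fin m → Fin L)
    (htk : ∀ i : Fin m, s ((tk i : ℕ)) ≤ (i : ℕ) ∧ (i : ℕ) < s ((tk i : ℕ) + 1))
    (M : Matrix (Fin m) (Fin m) F) (hM : IsUnit M) (b : Fin m → F) :
    Set.BijOn (fun x => M.mulVec x + b) (cartSet F K tk) (cartSet F K tk) ↔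
      ((∀ i : Fin m, b i ∈ K (tk i)) ∧
        ∀ i jj : Fin m, M i jj ∈ K (tk i) ∧ (s ((tk i : ℕ) + 1) ≤ (jj : ℕ) → M i jj = 0)) := by
  -- monotonicity of s on [0, L]
  have hsmono : ∀ a c : ℕ, a ≤ c → c ≤ L → s a ≤ s c := by
    intro a c hac hcL
    induction c with
    | zero =>
      have : a = 0 := by omega
      subst this; exact le_rfl
    | succ n ih =>
      rcases Nat.lt_or_ge a (n + 1) with h | h
      · have h1 : s a ≤ s n := ih (by omega) (by omega)
        have h2 : s (n + 1) = s n + μ ⟨n, by omega⟩ := hsrec ⟨n, by omega⟩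
        omega
      · have : a = n + 1 := by omega
        subst this; exact le_rfl
  have hKmono : ∀ t t' : Fin L, t ≤ t' → K t ≤ K t' := by
    intro t t' h
    rcases eq_or_lt_of_le h with rfl | h
    · exact le_rfl
    · exact (hK t t' h).le
  -- if s (tk i + 1) ≤ jj then tk i < tk jj
  have hblock : ∀ i jj : Fin m, s ((tk i : ℕ) + 1) ≤ (jj : ℕ) → tk i < tk jj := by
    intro i jj h
    by_contra hle
    push_neg at hle
    have h1 : s ((tk jj : ℕ) + 1) ≤ s ((tk i : ℕ) + 1) :=
      hsmono _ _ (by exact_mod_cast Nat.succ_le_succ hle) (Nat.succ_le_of_lt (tk i).2)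
    have := (htk jj).2
    omega
  constructor
  · intro h
    have h0 : (0 : Fin m → F) ∈ cartSet F K tk := fun i => zero_mem _
    have hb : ∀ i, b i ∈ K (tk i) := by
      have := h.mapsTo h0
      simpa [cartSet] using this
    have hsingle : ∀ (jj : Fin m) (c : F), c ∈ K (tk jj) → ∀ i, M i jj * c ∈ K (tk i) := by
      intro jj c hc i
      have hx : (Pi.single jj c : Fin m → F) ∈ cartSet F K tk := by
        intro i'
        rcases eq_or_ne i' jj with rfl | hne
        · simpa using hc
        · rw [Pi.single_eq_of_ne hne]; exact zero_mem _
      have hmem := h.mapsTo hx i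
      simp only [cartSet, Set.mem_setOf_eq, Pi.add_apply, Matrix.mulVec_single] at hmem
      have : M i jj * c + b i - b i ∈ K (tk i) := sub_mem hmem (hb i)
      simpa using this
    refine ⟨hb, fun i jj => ?_⟩
    have hmem : M i jj ∈ K (tk i) := by
      simpa using hsingle jj 1 (one_mem _) i
    refine ⟨hmem, fun hj => ?_⟩
    by_contra hne
    obtain ⟨c, hc, hcn⟩ := SetLike.exists_of_lt (hK _ _ (hblock i jj hj))
    have h1 : M i jj * c ∈ K (tk i) := hsingle jj c hc i
    have : c ∈ K (tk i) := by
      have := mul_mem (inv_mem hmem) h1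
      rwa [inv_mul_cancel_left₀ hne] at this
    exact hcn this
  · rintro ⟨hb, hMc⟩
    have hmaps : Set.MapsTo (fun x => M.mulVec x + b) (cartSet F K tk) (cartSet F K tk) := by
      intro x hx i
      simp only [Pi.add_apply]
      refine add_mem ?_ (hb i)
      rw [Matrix.mulVec, dotProduct]
      refine sum_mem fun jj _ => ?_
      rcases Nat.lt_or_ge (jj : ℕ) (s ((tk i : ℕ) + 1)) with hj | hj
      · have htj : tk jj ≤ tk i := by
          by_contra hlt
          push_neg at hlt
          have : s ((tk i : ℕ) + 1) ≤ s (tk jj : ℕ) :=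
            hsmono _ _ (by exact_mod_cast hlt) (le_of_lt (tk jj).2)
          have := (htk jj).1
          omega
        exact mul_mem (hMc i jj).1 (hKmono _ _ htj (hx jj))
      · rw [(hMc i jj).2 hj, zero_mul]
        exact zero_mem _
    have hinj : Set.InjOn (fun x => M.mulVec x + b) (cartSet F K tk) := by
      intro x _ y _ hxy
      simp only [add_left_inj] at hxy
      exact Matrix.mulVec_injective_iff_isUnit.mpr hM hxy
    exact ((Set.toFinite _).injOn_iff_bijOn_of_mapsTo hmaps).mp hinj
end

section
/- With A = F_1^{μ_1} × ⋯ × F_λ^{μ_λ} ⊆ F_q^m a product of nested subfields (|F_t| = d_{s_t}), the affine group Aff(A) has cardinality ∏_{i=1}^{λ} ( d_{s_i}^{μ_i(s_{i−1}+1)} · ∏_{t=0}^{μ_i−1} (d_{s_i}^{μ_i} − d_{s_i}^{t}) ). -/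
open Matrix Finset

namespace AG


variable {F : Type*} [Field F] {L m : ℕ} (K : Fin L → Subfield F) (μ : Fin L → ℕ)
  (s : ℕ → ℕ) (tk : Fin m → Fin L)

lemma s_mono (hsrec : ∀ t : Fin L, s ((t : ℕ) + 1) = s (t : ℕ) + μ t) :
    ∀ {a b : ℕ}, a ≤ b → b ≤ L → s a ≤ s b := by
  intro a b hab hb
  induction b with
  | zero =>
    obtain rfl : a = 0 := Nat.le_zero.mp hab
    exact le_rfl
  | succ n ih =>
    rcases Nat.eq_or_lt_of_le hab with rfl | h
    · exact le_rfl
    · have hn : n < L := hb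
      have h2 := hsrec ⟨n, hn⟩
      simp only [Fin.val_mk] at h2
      have h1 : s a ≤ s n := ih (Nat.lt_succ_iff.mp h) (le_of_lt hn)
      omega

lemma tk_eq (hsrec : ∀ t : Fin L, s ((t : ℕ) + 1) = s (t : ℕ) + μ t)
    (htk : ∀ i : Fin m, s ((tk i : ℕ)) ≤ (i : ℕ) ∧ (i : ℕ) < s ((tk i : ℕ) + 1))
    {i : Fin m} {t : Fin L} (h1 : s (t : ℕ) ≤ (i : ℕ)) (h2 : (i : ℕ) < s ((t : ℕ) + 1)) :
    tk i = t := by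
  rcases lt_trichotomy (tk i) t with h | h | h
  · exfalso
    have hle : (tk i : ℕ) + 1 ≤ (t : ℕ) := h
    have := s_mono μ s hsrec hle (le_of_lt t.isLt)
    have := (htk i).2
    omega
  · exact h
  · exfalso
    have hle : (t : ℕ) + 1 ≤ (tk i : ℕ) := h
    have := s_mono μ s hsrec hle (le_of_lt (tk i).isLt)
    have := (htk i).1
    omega

lemma s_succ_le (hsrec : ∀ t : Fin L, s ((t : ℕ) + 1) = s (t : ℕ) + μ t)
    (hm : m = s L) (t : Fin L) : s ((t : ℕ) + 1) ≤ m :=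
  hm ▸ s_mono μ s hsrec t.isLt le_rfl

/-- The `k`-th index inside block `t`. -/
def idx (hsrec : ∀ t : Fin L, s ((t : ℕ) + 1) = s (t : ℕ) + μ t)
    (hm : m = s L) (t : Fin L) (k : Fin (μ t)) : Fin m :=
  ⟨s (t : ℕ) + (k : ℕ), by
    have h1 := s_succ_le μ s hsrec hm t
    have h2 := hsrec t
    have := k.isLt
    omega⟩

lemma tk_idx (hsrec : ∀ t : Fin L, s ((t : ℕ) + 1) = s (t : ℕ) + μ t)
    (htk : ∀ i : Fin m, s ((tk i : ℕ)) ≤ (i : ℕ) ∧ (i : ℕ) < s ((tk i : ℕ) + 1))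
    (hm : m = s L) (t : Fin L) (k : Fin (μ t)) :
    tk (idx μ s hsrec hm t k) = t := by
  refine tk_eq μ s tk hsrec htk (by simp [idx]) ?_
  have h2 := hsrec t
  have := k.isLt
  simp only [idx]
  omega

lemma tk_lt_of_lt_s (hsrec : ∀ t : Fin L, s ((t : ℕ) + 1) = s (t : ℕ) + μ t)
    (htk : ∀ i : Fin m, s ((tk i : ℕ)) ≤ (i : ℕ) ∧ (i : ℕ) < s ((tk i : ℕ) + 1))
    {j : Fin m} {t : Fin L} (h : (j : ℕ) < s (t : ℕ)) : tk j < t := by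
  by_contra h'
  push_neg at h'
  have hle : (t : ℕ) ≤ (tk j : ℕ) := h'
  have := s_mono μ s hsrec hle (le_of_lt (tk j).isLt)
  have := (htk j).1
  omega

lemma lt_s_of_tk_lt (hsrec : ∀ t : Fin L, s ((t : ℕ) + 1) = s (t : ℕ) + μ t)
    (htk : ∀ i : Fin m, s ((tk i : ℕ)) ≤ (i : ℕ) ∧ (i : ℕ) < s ((tk i : ℕ) + 1))
    {j : Fin m} {t : Fin L} (h : tk j < t) : (j : ℕ) < s (t : ℕ) := by
  have hle : (tk j : ℕ) + 1 ≤ (t : ℕ) := h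
  have := s_mono μ s hsrec hle (le_of_lt t.isLt)
  have := (htk j).2
  omega

lemma sub_lt_mu (hsrec : ∀ t : Fin L, s ((t : ℕ) + 1) = s (t : ℕ) + μ t)
    (htk : ∀ i : Fin m, s ((tk i : ℕ)) ≤ (i : ℕ) ∧ (i : ℕ) < s ((tk i : ℕ) + 1))
    (i : Fin m) : (i : ℕ) - s ((tk i : ℕ)) < μ (tk i) := by
  have h1 := (htk i).1
  have h2 := (htk i).2
  have h3 := hsrec (tk i)
  omega




/-- kept matrices: entries in the right subfield, block lower triangular, invertible -/
def TT : Set (Matrix (Fin m) (Fin m) F) :=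
  {M | (∀ i j, M i j ∈ K (tk i)) ∧ (∀ i j, tk i < tk j → M i j = 0) ∧ IsUnit M}

lemma K_mono (hK : ∀ t t' : Fin L, t < t' → K t < K t') {t t' : Fin L} (h : t ≤ t') :
    K t ≤ K t' := by
  rcases lt_or_eq_of_le h with h | h
  · exact le_of_lt (hK _ _ h)
  · exact h ▸ le_rfl

lemma mem_cart_single {j : Fin m} {c : F} (hc : c ∈ K (tk j)) :
    Pi.single j c ∈ cartSet F K tk := by
  intro i
  rcases eq_or_ne i j with rfl | h
  · simpa using hc
  · simp only [Pi.single_apply, if_neg h]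
    exact zero_mem _

lemma card_K_lt_card_K [Fintype F] (hK : ∀ t t' : Fin L, t < t' → K t < K t')
    {t t' : Fin L} (h : t < t') : Nat.card (K t) < Nat.card (K t') := by
  have hss : (K t : Set F) ⊂ (K t' : Set F) := by
    rw [Set.ssubset_def]
    constructor
    · exact fun x hx => (hK t t' h).le hx
    · intro hsub
      exact absurd (SetLike.le_def.mpr fun x hx => hsub hx) (not_le_of_gt (hK t t' h))
  have := Set.ncard_lt_ncard hss (Set.toFinite _)
  rw [← Nat.card_coe_set_eq, ← Nat.card_coe_set_eq] at this
  exact this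

lemma mulVec_mem_iff [Fintype F] (hK : ∀ t t' : Fin L, t < t' → K t < K t')
    (M : Matrix (Fin m) (Fin m) F) :
    (∀ x ∈ cartSet F K tk, M.mulVec x ∈ cartSet F K tk) ↔
      ((∀ i j, M i j ∈ K (tk i)) ∧ (∀ i j, tk i < tk j → M i j = 0)) := by
  constructor
  · intro h
    have hmem : ∀ i j, M i j ∈ K (tk i) := by
      intro i j
      have h1 := h (Pi.single j 1) (mem_cart_single K tk (one_mem _)) i
      rw [mulVec_single_one] at h1
      exact h1
    refine ⟨hmem, ?_⟩
    intro i j hij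
    by_contra hne
    -- all products M i j * c, c ∈ K (tk j), lie in K (tk i)
    have hmul : ∀ c : F, c ∈ K (tk j) → M i j * c ∈ K (tk i) := by
      intro c hc
      have h1 := h (Pi.single j c) (mem_cart_single K tk hc) i
      rw [mulVec_single] at h1
      exact h1
    have hinj : Function.Injective (fun c : K (tk j) => (⟨M i j * c, hmul c c.2⟩ : K (tk i))) := by
      intro a b hab
      have : M i j * (a : F) = M i j * (b : F) := congrArg Subtype.val hab
      exact Subtype.ext (mul_left_cancel₀ hne this)
    have hle := Nat.card_le_card_of_injective _ hinj
    exact absurd hle (not_le_of_gt (card_K_lt_card_K K hK hij))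
  · rintro ⟨h1, h2⟩ x hx i
    rw [mulVec, dotProduct]
    apply Subfield.sum_mem
    intro j _
    rcases le_or_gt (tk j) (tk i) with h | h
    · exact mul_mem (h1 i j) (K_mono K hK h (hx j))
    · rw [h2 i j h, zero_mul]
      exact zero_mem _

section Blocks

variable {F : Type*} [Field F] {L m : ℕ} (K : Fin L → Subfield F) (μ : Fin L → ℕ)
  (s : ℕ → ℕ) (tk : Fin m → Fin L)
  (hsrec : ∀ t : Fin L, s ((t : ℕ) + 1) = s (t : ℕ) + μ t)
  (htk : ∀ i : Fin m, s ((tk i : ℕ)) ≤ (i : ℕ) ∧ (i : ℕ) < s ((tk i : ℕ) + 1))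
  (hm : m = s L)

/-- Equivalence between `Fin (μ t)` and the fiber of `tk` over `t` (as a dual-weight fiber). -/
def blockEquiv (t : Fin L) :
    Fin (μ t) ≃ {i : Fin m // (fun i => OrderDual.toDual (tk i)) i = OrderDual.toDual t} where
  toFun k := ⟨idx μ s hsrec hm t k, by
    show OrderDual.toDual (tk (idx μ s hsrec hm t k)) = OrderDual.toDual t
    rw [tk_idx μ s tk hsrec htk hm]⟩
  invFun p := ⟨(p.1 : ℕ) - s (t : ℕ), by
    have hp : tk p.1 = t := OrderDual.toDual.injective p.2
    have h := sub_lt_mu μ s tk hsrec htk p.1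
    rw [hp] at h
    exact h⟩
  left_inv k := by
    apply Fin.ext
    simp [idx]
  right_inv p := by
    have hp : tk p.1 = t := OrderDual.toDual.injective p.2
    have h1 := (htk p.1).1
    rw [hp] at h1
    apply Subtype.ext
    apply Fin.ext
    simp only [idx]
    omega

include htk in
lemma isUnit_iff_blocks (M : Matrix (Fin m) (Fin m) F)
    (hz : ∀ i j, tk i < tk j → M i j = 0) :
    IsUnit M ↔ ∀ t : Fin L,
      (Matrix.of fun k k' : Fin (μ t) =>
        M (idx μ s hsrec hm t k) (idx μ s hsrec hm t k')).det ≠ 0 := by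
  have hbt : M.BlockTriangular (fun i => OrderDual.toDual (tk i)) := by
    intro i j h
    exact hz i j h
  have hdet := hbt.det_fintype
  have hprod : ∀ t : Fin L, (M.toSquareBlock (fun i => OrderDual.toDual (tk i))
      (OrderDual.toDual t)).det =
      (Matrix.of fun k k' : Fin (μ t) =>
        M (idx μ s hsrec hm t k) (idx μ s hsrec hm t k')).det := by
    intro t
    have heq : M.toSquareBlock (fun i => OrderDual.toDual (tk i)) (OrderDual.toDual t) =
        Matrix.reindex (blockEquiv μ s tk hsrec htk hm t) (blockEquiv μ s tk hsrec htk hm t)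
          (Matrix.of fun k k' : Fin (μ t) =>
            M (idx μ s hsrec hm t k) (idx μ s hsrec hm t k')) := by
      ext p q
      have hp : ((blockEquiv μ s tk hsrec htk hm t)
          ((blockEquiv μ s tk hsrec htk hm t).symm p)).1 = p.1 := by
        rw [Equiv.apply_symm_apply]
      have hq : ((blockEquiv μ s tk hsrec htk hm t)
          ((blockEquiv μ s tk hsrec htk hm t).symm q)).1 = q.1 := by
        rw [Equiv.apply_symm_apply]
      simp only [Matrix.toSquareBlock_def, Matrix.reindex_apply, Matrix.submatrix_apply,
        Matrix.of_apply]
      rw [show idx μ s hsrec hm t ((blockEquiv μ s tk hsrec htk hm t).symm p) =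
        ((blockEquiv μ s tk hsrec htk hm t) ((blockEquiv μ s tk hsrec htk hm t).symm p)).1 from rfl]
      rw [show idx μ s hsrec hm t ((blockEquiv μ s tk hsrec htk hm t).symm q) =
        ((blockEquiv μ s tk hsrec htk hm t) ((blockEquiv μ s tk hsrec htk hm t).symm q)).1 from rfl]
      rw [hp, hq]
    rw [heq, Matrix.det_reindex_self]
  rw [Matrix.isUnit_iff_isUnit_det, isUnit_iff_ne_zero, hdet]
  have hswap : ∏ a : (Fin L)ᵒᵈ, (M.toSquareBlock (fun i => OrderDual.toDual (tk i)) a).det =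
      ∏ t : Fin L, (Matrix.of fun k k' : Fin (μ t) =>
        M (idx μ s hsrec hm t k) (idx μ s hsrec hm t k')).det :=
    (Fintype.prod_equiv (OrderDual.toDual : Fin L ≃ (Fin L)ᵒᵈ)
      (fun t => (Matrix.of fun k k' : Fin (μ t) =>
        M (idx μ s hsrec hm t k) (idx μ s hsrec hm t k')).det)
      (fun a => (M.toSquareBlock (fun i => OrderDual.toDual (tk i)) a).det)
      (fun t => (hprod t).symm)).symm
  rw [hswap, Finset.prod_ne_zero_iff]
  simp

end Blocks

section Psi

variable {F : Type*} [Field F] {L m : ℕ} (K : Fin L → Subfield F) (μ : Fin L → ℕ)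
  (s : ℕ → ℕ) (tk : Fin m → Fin L)

/-- The parameter space: for each block, a lower rectangular matrix over `K t` and an
invertible square matrix over `K t`. -/
def Wtype : Type _ :=
  Π t : Fin L, ((Fin (μ t) → Fin (s (t : ℕ)) → K t) ×
    { D : Matrix (Fin (μ t)) (Fin (μ t)) (K t) // IsUnit D })

/-- The `b`-th index among the first `s t` coordinates. -/
def jdx (hsrec : ∀ t : Fin L, s ((t : ℕ) + 1) = s (t : ℕ) + μ t)
    (htk : ∀ i : Fin m, s ((tk i : ℕ)) ≤ (i : ℕ) ∧ (i : ℕ) < s ((tk i : ℕ) + 1))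
    (hm : m = s L) (t : Fin L) (b : Fin (s (t : ℕ))) : Fin m :=
  ⟨(b : ℕ), by
    have h1 := s_mono μ s hsrec (le_of_lt t.isLt) le_rfl
    have h2 := b.isLt
    omega⟩

lemma tk_jdx_lt (hsrec : ∀ t : Fin L, s ((t : ℕ) + 1) = s (t : ℕ) + μ t)
    (htk : ∀ i : Fin m, s ((tk i : ℕ)) ≤ (i : ℕ) ∧ (i : ℕ) < s ((tk i : ℕ) + 1))
    (hm : m = s L) (t : Fin L) (b : Fin (s (t : ℕ))) :
    tk (jdx μ s tk hsrec htk hm t b) < t :=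
  tk_lt_of_lt_s μ s tk hsrec htk b.isLt

/-- The matrix over `F` assembled from the block data `w`. -/
def psi (hsrec : ∀ t : Fin L, s ((t : ℕ) + 1) = s (t : ℕ) + μ t)
    (htk : ∀ i : Fin m, s ((tk i : ℕ)) ≤ (i : ℕ) ∧ (i : ℕ) < s ((tk i : ℕ) + 1))
    (hm : m = s L) (w : Wtype K μ s) : Matrix (Fin m) (Fin m) F :=
  Matrix.of fun i j =>
    if hij : tk i = tk j then
      ((w (tk i)).2.1 ⟨(i : ℕ) - s ((tk i : ℕ)), sub_lt_mu μ s tk hsrec htk i⟩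
        ⟨(j : ℕ) - s ((tk i : ℕ)), by
          have h := sub_lt_mu μ s tk hsrec htk j
          rw [← hij] at h
          exact h⟩ : F)
    else if hlt : tk j < tk i then
      ((w (tk i)).1 ⟨(i : ℕ) - s ((tk i : ℕ)), sub_lt_mu μ s tk hsrec htk i⟩
        ⟨(j : ℕ), lt_s_of_tk_lt μ s tk hsrec htk hlt⟩ : F)
    else 0

lemma psi_apply_diag (hsrec : ∀ t : Fin L, s ((t : ℕ) + 1) = s (t : ℕ) + μ t)
    (htk : ∀ i : Fin m, s ((tk i : ℕ)) ≤ (i : ℕ) ∧ (i : ℕ) < s ((tk i : ℕ) + 1))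
    (hm : m = s L) (w : Wtype K μ s) {i j : Fin m} {t : Fin L}
    (hi : tk i = t) (hj : tk j = t) (k k' : Fin (μ t))
    (hk : (k : ℕ) = (i : ℕ) - s ((t : ℕ))) (hk' : (k' : ℕ) = (j : ℕ) - s ((t : ℕ))) :
    psi K μ s tk hsrec htk hm w i j = ((w t).2.1 k k' : F) := by
  subst hi
  simp only [psi, Matrix.of_apply]
  rw [dif_pos hj.symm]
  simp only [← hk, ← hk', Fin.eta]

lemma psi_apply_low (hsrec : ∀ t : Fin L, s ((t : ℕ) + 1) = s (t : ℕ) + μ t)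
    (htk : ∀ i : Fin m, s ((tk i : ℕ)) ≤ (i : ℕ) ∧ (i : ℕ) < s ((tk i : ℕ) + 1))
    (hm : m = s L) (w : Wtype K μ s) {i j : Fin m} {t : Fin L}
    (hi : tk i = t) (hlt : tk j < t) (k : Fin (μ t)) (b : Fin (s (t : ℕ)))
    (hk : (k : ℕ) = (i : ℕ) - s ((t : ℕ))) (hb : (b : ℕ) = (j : ℕ)) :
    psi K μ s tk hsrec htk hm w i j = ((w t).1 k b : F) := by
  subst hi
  simp only [psi, Matrix.of_apply]
  rw [dif_neg (by intro h; rw [h] at hlt; exact lt_irrefl _ hlt), dif_pos hlt]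
  simp only [← hk, ← hb, Fin.eta]

lemma psi_apply_zero (hsrec : ∀ t : Fin L, s ((t : ℕ) + 1) = s (t : ℕ) + μ t)
    (htk : ∀ i : Fin m, s ((tk i : ℕ)) ≤ (i : ℕ) ∧ (i : ℕ) < s ((tk i : ℕ) + 1))
    (hm : m = s L) (w : Wtype K μ s) {i j : Fin m} (h : tk i < tk j) :
    psi K μ s tk hsrec htk hm w i j = 0 := by
  simp only [psi, Matrix.of_apply]
  rw [dif_neg (by intro he; rw [he] at h; exact lt_irrefl _ h), dif_neg (lt_asymm h)]

lemma psi_block (hsrec : ∀ t : Fin L, s ((t : ℕ) + 1) = s (t : ℕ) + μ t)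
    (htk : ∀ i : Fin m, s ((tk i : ℕ)) ≤ (i : ℕ) ∧ (i : ℕ) < s ((tk i : ℕ) + 1))
    (hm : m = s L) (w : Wtype K μ s) (t : Fin L) :
    (Matrix.of fun k k' : Fin (μ t) =>
      psi K μ s tk hsrec htk hm w (idx μ s hsrec hm t k) (idx μ s hsrec hm t k')) =
    ((w t).2.1).map (K t).subtype := by
  ext k k'
  simp only [Matrix.of_apply, Matrix.map_apply]
  exact psi_apply_diag K μ s tk hsrec htk hm w (tk_idx μ s tk hsrec htk hm t k)
    (tk_idx μ s tk hsrec htk hm t k') k k' (by simp [idx]) (by simp [idx])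

lemma psi_mem_TT (hsrec : ∀ t : Fin L, s ((t : ℕ) + 1) = s (t : ℕ) + μ t)
    (htk : ∀ i : Fin m, s ((tk i : ℕ)) ≤ (i : ℕ) ∧ (i : ℕ) < s ((tk i : ℕ) + 1))
    (hm : m = s L) (w : Wtype K μ s) : psi K μ s tk hsrec htk hm w ∈ TT K tk := by
  refine ⟨?_, ?_, ?_⟩
  · intro i j
    simp only [psi, Matrix.of_apply]
    split_ifs with h1 h2
    · exact SetLike.coe_mem _
    · exact SetLike.coe_mem _
    · exact zero_mem _
  · intro i j h
    exact psi_apply_zero K μ s tk hsrec htk hm w h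
  · rw [isUnit_iff_blocks μ s tk hsrec htk hm _
      (fun i j h => psi_apply_zero K μ s tk hsrec htk hm w h)]
    intro t
    rw [psi_block K μ s tk hsrec htk hm w t]
    rw [show ((w t).2.1).map ⇑(K t).subtype = (K t).subtype.mapMatrix ((w t).2.1) from rfl]
    rw [← RingHom.map_det]
    rw [map_ne_zero_iff _ (K t).subtype.injective]
    have h2 := (w t).2.2
    rw [Matrix.isUnit_iff_isUnit_det, isUnit_iff_ne_zero] at h2
    exact h2

/-- Forward map: extract block data from a kept matrix. -/
def phiFun (hsrec : ∀ t : Fin L, s ((t : ℕ) + 1) = s (t : ℕ) + μ t)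
    (htk : ∀ i : Fin m, s ((tk i : ℕ)) ≤ (i : ℕ) ∧ (i : ℕ) < s ((tk i : ℕ) + 1))
    (hm : m = s L) (M : ↥(TT K tk)) : Wtype K μ s := fun t =>
    ⟨fun k b => ⟨M.1 (idx μ s hsrec hm t k) (jdx μ s tk hsrec htk hm t b), by
        have h := M.2.1 (idx μ s hsrec hm t k) (jdx μ s tk hsrec htk hm t b)
        rwa [tk_idx μ s tk hsrec htk hm] at h⟩,
     ⟨Matrix.of fun k k' => ⟨M.1 (idx μ s hsrec hm t k) (idx μ s hsrec hm t k'), by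
        have h := M.2.1 (idx μ s hsrec hm t k) (idx μ s hsrec hm t k')
        rwa [tk_idx μ s tk hsrec htk hm] at h⟩, by
      rw [Matrix.isUnit_iff_isUnit_det, isUnit_iff_ne_zero]
      intro h0
      have hdetF : (Matrix.of fun k k' : Fin (μ t) => M.1 (idx μ s hsrec hm t k)
          (idx μ s hsrec hm t k')).det = 0 := by
        have hmap : (Matrix.of fun k k' : Fin (μ t) => M.1 (idx μ s hsrec hm t k)
            (idx μ s hsrec hm t k')) =
            (K t).subtype.mapMatrix (Matrix.of fun k k' : Fin (μ t) =>
              (⟨M.1 (idx μ s hsrec hm t k) (idx μ s hsrec hm t k'), by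
                have h := M.2.1 (idx μ s hsrec hm t k) (idx μ s hsrec hm t k')
                rwa [tk_idx μ s tk hsrec htk hm] at h⟩ : K t)) := by
          ext k k'
          rfl
        rw [hmap, ← RingHom.map_det, h0]
        exact map_zero _
      exact (isUnit_iff_blocks μ s tk hsrec htk hm M.1 M.2.2.1).mp M.2.2.2 t hdetF⟩⟩

/-- Backward map: assemble a kept matrix from block data. -/
def psiFun (hsrec : ∀ t : Fin L, s ((t : ℕ) + 1) = s (t : ℕ) + μ t)
    (htk : ∀ i : Fin m, s ((tk i : ℕ)) ≤ (i : ℕ) ∧ (i : ℕ) < s ((tk i : ℕ) + 1))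
    (hm : m = s L) (w : Wtype K μ s) : ↥(TT K tk) :=
  ⟨psi K μ s tk hsrec htk hm w, psi_mem_TT K μ s tk hsrec htk hm w⟩

/-- The main equivalence between the set of kept matrices and the block data. -/
noncomputable def ttEquiv (hsrec : ∀ t : Fin L, s ((t : ℕ) + 1) = s (t : ℕ) + μ t)
    (htk : ∀ i : Fin m, s ((tk i : ℕ)) ≤ (i : ℕ) ∧ (i : ℕ) < s ((tk i : ℕ) + 1))
    (hm : m = s L) : ↥(TT K tk) ≃ Wtype K μ s where
  toFun := phiFun K μ s tk hsrec htk hm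
  invFun := psiFun K μ s tk hsrec htk hm
  left_inv M := by
    apply Subtype.ext
    ext i j
    show psi K μ s tk hsrec htk hm (phiFun K μ s tk hsrec htk hm M) i j = M.1 i j
    rcases lt_trichotomy (tk i) (tk j) with h | h | h
    · rw [psi_apply_zero K μ s tk hsrec htk hm _ h, M.2.2.1 i j h]
    · rw [psi_apply_diag K μ s tk hsrec htk hm _ rfl h.symm
        ⟨(i : ℕ) - s ((tk i : ℕ)), sub_lt_mu μ s tk hsrec htk i⟩
        ⟨(j : ℕ) - s ((tk i : ℕ)), by
          have hh := sub_lt_mu μ s tk hsrec htk j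
          rw [← h] at hh
          exact hh⟩ rfl rfl]
      show M.1 (idx μ s hsrec hm (tk i) _) (idx μ s hsrec hm (tk i) _) = M.1 i j
      rw [show idx μ s hsrec hm (tk i) ⟨(i : ℕ) - s ((tk i : ℕ)), _⟩ = i from
        Fin.ext (by simp only [idx]; have h3 := (htk i).1; omega)]
      rw [show idx μ s hsrec hm (tk i) ⟨(j : ℕ) - s ((tk i : ℕ)), _⟩ = j from
        Fin.ext (by
          simp only [idx]
          have h3 := (htk j).1
          rw [h]
          omega)]
    · rw [psi_apply_low K μ s tk hsrec htk hm _ rfl h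
        ⟨(i : ℕ) - s ((tk i : ℕ)), sub_lt_mu μ s tk hsrec htk i⟩
        ⟨(j : ℕ), lt_s_of_tk_lt μ s tk hsrec htk h⟩ rfl rfl]
      show M.1 (idx μ s hsrec hm (tk i) _) (jdx μ s tk hsrec htk hm (tk i) _) = M.1 i j
      rw [show idx μ s hsrec hm (tk i) ⟨(i : ℕ) - s ((tk i : ℕ)), _⟩ = i from
        Fin.ext (by simp only [idx]; have h3 := (htk i).1; omega)]
      rw [show jdx μ s tk hsrec htk hm (tk i) ⟨(j : ℕ), _⟩ = j from Fin.ext rfl]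
  right_inv w := by
    funext t
    refine Prod.ext ?_ ?_
    · funext k b
      apply Subtype.ext
      show psi K μ s tk hsrec htk hm w (idx μ s hsrec hm t k) (jdx μ s tk hsrec htk hm t b) = _
      rw [psi_apply_low K μ s tk hsrec htk hm w (tk_idx μ s tk hsrec htk hm t k)
        (tk_jdx_lt μ s tk hsrec htk hm t b) k b (by simp [idx]) rfl]
    · apply Subtype.ext
      ext k k'
      show psi K μ s tk hsrec htk hm w (idx μ s hsrec hm t k) (idx μ s hsrec hm t k') = _
      rw [psi_apply_diag K μ s tk hsrec htk hm w (tk_idx μ s tk hsrec htk hm t k)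
        (tk_idx μ s tk hsrec htk hm t k') k k' (by simp [idx]) (by simp [idx])]

end Psi


section Counting

variable {F : Type*} [Field F] {L m : ℕ} (K : Fin L → Subfield F) (μ : Fin L → ℕ)
  (s : ℕ → ℕ) (tk : Fin m → Fin L)

lemma card_fiber (hsrec : ∀ t : Fin L, s ((t : ℕ) + 1) = s (t : ℕ) + μ t)
    (htk : ∀ i : Fin m, s ((tk i : ℕ)) ≤ (i : ℕ) ∧ (i : ℕ) < s ((tk i : ℕ) + 1))
    (hm : m = s L) (t : Fin L) :
    (Finset.univ.filter fun i : Fin m => tk i = t).card = μ t := by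
  have h1 : (Finset.Ico (s (t : ℕ)) (s ((t : ℕ) + 1))).card = μ t := by
    rw [Nat.card_Ico]
    have := hsrec t
    omega
  rw [← h1]
  apply Finset.card_bij (fun (i : Fin m) _ => (i : ℕ))
  · intro i hi
    rw [Finset.mem_filter] at hi
    rw [Finset.mem_Ico, ← hi.2]
    exact htk i
  · intro a _ b _ hab
    exact Fin.ext hab
  · intro n hn
    rw [Finset.mem_Ico] at hn
    have hlt : n < m := lt_of_lt_of_le hn.2 (s_succ_le μ s hsrec hm t)
    refine ⟨⟨n, hlt⟩, ?_, rfl⟩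
    rw [Finset.mem_filter]
    exact ⟨Finset.mem_univ _, tk_eq μ s tk hsrec htk hn.1 hn.2⟩

/-- The product set is equivalent to the dependent product of the subfields. -/
def cartEquiv : ↥(cartSet F K tk) ≃ Π i : Fin m, ↥(K (tk i)) where
  toFun x i := ⟨x.1 i, x.2 i⟩
  invFun f := ⟨fun i => f i, fun i => (f i).2⟩
  left_inv x := by
    apply Subtype.ext
    rfl
  right_inv f := by
    funext i
    rfl

lemma card_cartSet [Fintype F] (hsrec : ∀ t : Fin L, s ((t : ℕ) + 1) = s (t : ℕ) + μ t)
    (htk : ∀ i : Fin m, s ((tk i : ℕ)) ≤ (i : ℕ) ∧ (i : ℕ) < s ((tk i : ℕ) + 1))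
    (hm : m = s L) :
    Nat.card ↥(cartSet F K tk) = ∏ t : Fin L, Nat.card (K t) ^ μ t := by
  rw [Nat.card_congr (cartEquiv K tk), Nat.card_pi]
  rw [← Finset.prod_fiberwise' Finset.univ tk (fun t => Nat.card (K t))]
  refine Finset.prod_congr rfl fun t _ => ?_
  rw [Finset.prod_const, card_fiber μ s tk hsrec htk hm t]

/-- `Units` of a monoid are equivalent to the subtype of elements that are units. -/
noncomputable def unitsEquivIsUnit (R : Type*) [Monoid R] : Rˣ ≃ {x : R // IsUnit x} where
  toFun u := ⟨u, u.isUnit⟩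
  invFun x := x.2.unit
  left_inv u := Units.ext (by simp)
  right_inv x := Subtype.ext (by simp)

lemma card_isUnit_matrix (R : Type*) [Field R] [Fintype R] (n : ℕ) :
    Nat.card {D : Matrix (Fin n) (Fin n) R // IsUnit D} =
      ∏ i ∈ Finset.range n, (Fintype.card R ^ n - Fintype.card R ^ i) := by
  rw [← Nat.card_congr (unitsEquivIsUnit (Matrix (Fin n) (Fin n) R))]
  have h := Matrix.card_GL_field (𝔽 := R) n
  rw [show (Matrix (Fin n) (Fin n) R)ˣ = GL (Fin n) R from rfl, h]
  rw [← Fin.prod_univ_eq_prod_range]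

lemma card_Wtype [Fintype F] (hsrec : ∀ t : Fin L, s ((t : ℕ) + 1) = s (t : ℕ) + μ t)
    (htk : ∀ i : Fin m, s ((tk i : ℕ)) ≤ (i : ℕ) ∧ (i : ℕ) < s ((tk i : ℕ) + 1))
    (hm : m = s L) :
    Nat.card (Wtype K μ s) = ∏ t : Fin L,
      (Nat.card (K t) ^ (μ t * s (t : ℕ)) *
        ∏ i ∈ Finset.range (μ t), (Nat.card (K t) ^ μ t - Nat.card (K t) ^ i)) := by
  rw [show Wtype K μ s = (Π t : Fin L, ((Fin (μ t) → Fin (s (t : ℕ)) → K t) ×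
    { D : Matrix (Fin (μ t)) (Fin (μ t)) (K t) // IsUnit D })) from rfl, Nat.card_pi]
  refine Finset.prod_congr rfl fun t _ => ?_
  have : Fintype (K t) := Fintype.ofFinite _
  rw [Nat.card_prod, Nat.card_fun, Nat.card_fun, card_isUnit_matrix]
  simp only [Nat.card_eq_fintype_card, Fintype.card_fin]
  ring_nf

end Counting


section Reduce

variable {F : Type*} [Field F] [Fintype F] {L m : ℕ} (K : Fin L → Subfield F)
  (tk : Fin m → Fin L)

/-- The set of pairs (matrix, translation) defining affine bijections of the product set. -/
def Pset : Set (Matrix (Fin m) (Fin m) F × (Fin m → F)) :=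
  {p | IsUnit p.1 ∧ ∀ x ∈ cartSet F K tk, p.1.mulVec x + p.2 ∈ cartSet F K tk}

open scoped Classical in
/-- The affine map on the product set associated to a pair. -/
noncomputable def affMap (p : Matrix (Fin m) (Fin m) F × (Fin m → F)) :
    ↥(cartSet F K tk) → ↥(cartSet F K tk) := fun x =>
  if h : p.1.mulVec ↑x + p.2 ∈ cartSet F K tk then ⟨_, h⟩ else x

lemma affMap_coe {p : Matrix (Fin m) (Fin m) F × (Fin m → F)} (hp : p ∈ Pset K tk)
    (x : ↥(cartSet F K tk)) : (affMap K tk p x : Fin m → F) = p.1.mulVec ↑x + p.2 := by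
  simp only [affMap]
  rw [dif_pos (hp.2 ↑x x.2)]

lemma zero_mem_cart : (0 : Fin m → F) ∈ cartSet F K tk := fun _ => zero_mem _

lemma affMap_image :
    affMap K tk '' Pset K tk = {φ : ↥(cartSet F K tk) → ↥(cartSet F K tk) |
      Function.Bijective φ ∧ ∃ M : Matrix (Fin m) (Fin m) F, IsUnit M ∧ ∃ b : Fin m → F,
        ∀ x : ↥(cartSet F K tk), (φ x : Fin m → F) = M.mulVec (x : Fin m → F) + b} := by
  ext φ
  constructor
  · rintro ⟨p, hp, rfl⟩
    have hinj : Function.Injective (affMap K tk p) := by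
      intro x y hxy
      have h1 := congrArg Subtype.val hxy
      rw [affMap_coe K tk hp, affMap_coe K tk hp] at h1
      have h2 := add_right_cancel h1
      exact Subtype.ext (Matrix.mulVec_injective_iff_isUnit.mpr hp.1 h2)
    exact ⟨Finite.injective_iff_bijective.mp hinj, p.1, hp.1, p.2, affMap_coe K tk hp⟩
  · rintro ⟨hbij, M, hM, b, hb⟩
    refine ⟨(M, b), ⟨hM, fun x hx => ?_⟩, ?_⟩
    · have := (φ ⟨x, hx⟩).2
      rwa [show (φ ⟨x, hx⟩ : Fin m → F) = M.mulVec x + b from hb ⟨x, hx⟩] at this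
    · funext x
      apply Subtype.ext
      have hmem : M.mulVec ↑x + b ∈ cartSet F K tk := by
        rw [← hb x]
        exact (φ x).2
      simp only [affMap]
      rw [dif_pos hmem]
      exact (hb x).symm

lemma affMap_injOn : Set.InjOn (affMap K tk) (Pset K tk) := by
  intro p hp q hq h
  have hb : p.2 = q.2 := by
    have h0 := congrArg Subtype.val (congrFun h ⟨0, zero_mem_cart K tk⟩)
    rw [affMap_coe K tk hp, affMap_coe K tk hq] at h0
    simpa using h0
  have hMeq : p.1 = q.1 := by
    ext i j
    have hj := congrArg Subtype.val
      (congrFun h ⟨Pi.single j 1, mem_cart_single K tk (one_mem _)⟩)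
    rw [affMap_coe K tk hp, affMap_coe K tk hq, hb] at hj
    have h2 := add_right_cancel hj
    rw [Matrix.mulVec_single_one, Matrix.mulVec_single_one] at h2
    exact congrFun h2 i
  exact Prod.ext hMeq hb

lemma Pset_eq (hK : ∀ t t' : Fin L, t < t' → K t < K t') :
    Pset K tk = (TT K tk) ×ˢ (cartSet F K tk) := by
  ext p
  constructor
  · rintro ⟨hu, hall⟩
    have hb : p.2 ∈ cartSet F K tk := by
      have h0 := hall 0 (zero_mem_cart K tk)
      simpa using h0
    have hsub : ∀ x ∈ cartSet F K tk, p.1.mulVec x ∈ cartSet F K tk := by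
      intro x hx i
      have h1 : p.1.mulVec x i = (p.1.mulVec x + p.2) i - p.2 i := by simp
      rw [h1]
      exact sub_mem (hall x hx i) (hb i)
    obtain ⟨h1, h2⟩ := (mulVec_mem_iff K tk hK p.1).mp hsub
    exact ⟨⟨h1, h2, hu⟩, hb⟩
  · rintro ⟨⟨h1, h2, hu⟩, hb⟩
    refine ⟨hu, fun x hx i => ?_⟩
    have := (mulVec_mem_iff K tk hK p.1).mpr ⟨h1, h2⟩ x hx i
    exact add_mem this (hb i)

end Reduce

end AG

/-- The cardinality of the affine group Aff(A) of a product of nested subfields: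
`|Aff(A)| = ∏_t |F_t|^{μ_t (s_{t-1}+1)} · ∏_{i=0}^{μ_t - 1} (|F_t|^{μ_t} - |F_t|^i)`. -/
theorem card_affine_group
    (F : Type*) [Field F] [Fintype F] (q : ℕ) (hq : Fintype.card F = q)
    (L m : ℕ) (K : Fin L → Subfield F)
    (hK : ∀ t t' : Fin L, t < t' → K t < K t')
    (μ : Fin L → ℕ) (hμ : ∀ t, 1 ≤ μ t)
    (s : ℕ → ℕ) (hs0 : s 0 = 0) (hsrec : ∀ t : Fin L, s ((t : ℕ) + 1) = s (t : ℕ) + μ t)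
    (hm : m = s L)
    (tk : Fin m → Fin L)
    (htk : ∀ i : Fin m, s ((tk i : ℕ)) ≤ (i : ℕ) ∧ (i : ℕ) < s ((tk i : ℕ) + 1))
    (d : ℕ → ℕ) (hd : ∀ i : Fin m, d (i : ℕ) = Nat.card (K (tk i)))
 :
    Set.ncard {φ : ↥(cartSet F K tk) → ↥(cartSet F K tk) |
        Function.Bijective φ ∧ ∃ M : Matrix (Fin m) (Fin m) F, IsUnit M ∧ ∃ b : Fin m → F,
          ∀ x : ↥(cartSet F K tk), (φ x : Fin m → F) = M.mulVec (x : Fin m → F) + b} =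
      ∏ t : Fin L, (Nat.card (K t) ^ (μ t * (s (t : ℕ) + 1)) *
        ∏ i ∈ Finset.range (μ t), (Nat.card (K t) ^ μ t - Nat.card (K t) ^ i)) := by
  rw [← AG.affMap_image K tk, Set.ncard_image_of_injOn (AG.affMap_injOn K tk),
    AG.Pset_eq K tk hK]
  rw [← Nat.card_coe_set_eq, Nat.card_congr (Equiv.Set.prod _ _), Nat.card_prod]
  rw [Nat.card_coe_set_eq, Nat.card_coe_set_eq]
  rw [← Nat.card_coe_set_eq, ← Nat.card_coe_set_eq]
  rw [Nat.card_congr (AG.ttEquiv K μ s tk hsrec htk hm),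
    AG.card_Wtype K μ s tk hsrec htk hm, AG.card_cartSet K μ s tk hsrec htk hm]
  rw [← Finset.prod_mul_distrib]
  refine Finset.prod_congr rfl fun t _ => ?_
  ring
end

section
/- Let 1 ≤ t ≤ m and let h_t(X_1,…,X_m) = ∏_{i=1}^{t}(1 − X_i^{q−1}) ∈ F_q[X_1,…,X_m]. For γ ∈ F_q^* and an affine map σ_{A,b}(X) = AX + b with A ∈ GL(m,F_q), b ∈ F_q^m, one has γ·h_t(AP + b) = h_t(P) for all P ∈ F_q^m if and only if γ = 1, A ∈ M_q(t,m), and b_1 = ⋯ = b_t = 0. -/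
/-- The function `h_t(X) = ∏_{i=1}^{t} (1 - X_i^{q-1})` on `F_q^m`. -/
def hPoly (F : Type*) [Field F] (q : ℕ) {m : ℕ} (t : ℕ) (x : Fin m → F) : F :=
  ∏ i ∈ Finset.univ.filter (fun i : Fin m => (i : ℕ) < t), (1 - x i ^ (q - 1))

lemma hPoly_eq_one {F : Type*} [Field F] [Fintype F] {q m t : ℕ}
    (hq : Fintype.card F = q) (x : Fin m → F)
    (h : ∀ i : Fin m, (i : ℕ) < t → x i = 0) : hPoly F q t x = 1 := by
  have hq2 : 1 < q := hq ▸ Fintype.one_lt_card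
  apply Finset.prod_eq_one
  intro i hi
  rw [Finset.mem_filter] at hi
  rw [h i hi.2, zero_pow (by omega), sub_zero]

lemma hPoly_eq_zero {F : Type*} [Field F] [Fintype F] {q m t : ℕ}
    (hq : Fintype.card F = q) (x : Fin m → F) (i : Fin m) (hi : (i : ℕ) < t)
    (hx : x i ≠ 0) : hPoly F q t x = 0 := by
  apply Finset.prod_eq_zero (i := i)
  · simp [hi]
  · rw [← hq, FiniteField.pow_card_sub_one_eq_one _ hx, sub_self]

/-- For `γ ∈ F_q^*` and the affine map `X ↦ AX + b` with `A` invertible,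
`γ · h_t(AP + b) = h_t(P)` for all `P ∈ F_q^m` if and only if `γ = 1`,
`A ∈ M_q(t,m)` (block lower triangular) and `b_1 = ⋯ = b_t = 0`. -/
theorem stab_hPoly (F : Type*) [Field F] [Fintype F] [DecidableEq F] (q m t : ℕ)
    (hq : Fintype.card F = q) (ht : 1 ≤ t) (htm : t ≤ m)
    (γ : F) (hγ : γ ≠ 0) (M : Matrix (Fin m) (Fin m) F) (hM : IsUnit M) (b : Fin m → F) :
    (∀ P : Fin m → F, γ * hPoly F q t (M.mulVec P + b) = hPoly F q t P) ↔
      (γ = 1 ∧ (∀ i j : Fin m, (i : ℕ) < t → t ≤ (j : ℕ) → M i j = 0) ∧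
        ∀ i : Fin m, (i : ℕ) < t → b i = 0) := by
  have hdet : IsUnit M.det := (Matrix.isUnit_iff_isUnit_det M).mp hM
  have hinj : Function.Injective (fun P : Fin m → F => M.mulVec P + b) := by
    intro P Q hPQ
    simp only [add_left_inj] at hPQ
    have : M⁻¹.mulVec (M.mulVec P) = M⁻¹.mulVec (M.mulVec Q) := by rw [hPQ]
    rwa [Matrix.mulVec_mulVec, Matrix.mulVec_mulVec, Matrix.nonsing_inv_mul M hdet,
      Matrix.one_mulVec, Matrix.one_mulVec] at this
  -- hPoly takes values 0 or 1
  have hval : ∀ x : Fin m → F, hPoly F q t x = 0 ∨ hPoly F q t x = 1 := by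
    intro x
    by_cases h : ∀ i : Fin m, (i : ℕ) < t → x i = 0
    · exact Or.inr (hPoly_eq_one hq x h)
    · push_neg at h
      obtain ⟨i, hi, hx⟩ := h
      exact Or.inl (hPoly_eq_zero hq x i hi hx)
  constructor
  · intro H
    -- from P = 0: γ * hPoly (b) = 1
    have h0 : γ * hPoly F q t (M.mulVec 0 + b) = 1 := by
      rw [H 0, hPoly_eq_one hq 0 (by intro i _; rfl)]
    have hb1 : hPoly F q t (M.mulVec 0 + b) = 1 := by
      rcases hval (M.mulVec 0 + b) with h | h
      · rw [h, mul_zero] at h0; exact absurd h0 zero_ne_one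
      · exact h
    have hγ1 : γ = 1 := by rw [hb1, mul_one] at h0; exact h0
    have hbzero : ∀ i : Fin m, (i : ℕ) < t → b i = 0 := by
      intro i hi
      by_contra hbi
      have : (M.mulVec 0 + b) i ≠ 0 := by
        simpa [Matrix.mulVec_zero] using hbi
      rw [hPoly_eq_zero hq _ i hi this] at hb1
      exact zero_ne_one hb1
    refine ⟨hγ1, ?_, hbzero⟩
    intro i j hi hj
    -- use P = single j 1
    have hPZ : hPoly F q t (Pi.single j (1 : F)) = 1 := by
      apply hPoly_eq_one hq
      intro k hk
      apply Pi.single_eq_of_ne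
      intro hkj
      rw [hkj] at hk; omega
    have h1 : γ * hPoly F q t (M.mulVec (Pi.single j 1) + b) = 1 := by
      rw [H _, hPZ]
    have h2 : hPoly F q t (M.mulVec (Pi.single j 1) + b) = 1 := by
      rcases hval (M.mulVec (Pi.single j 1) + b) with h | h
      · rw [h, mul_zero] at h1; exact absurd h1 zero_ne_one
      · exact h
    by_contra hMij
    have hMv : (M.mulVec (Pi.single j 1) + b) i ≠ 0 := by
      have : M.mulVec (Pi.single j 1) i = M i j := by
        simp [Matrix.mulVec, dotProduct, Pi.single_apply, Finset.sum_ite_eq]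
      simp only [Pi.add_apply, this, hbzero i hi, add_zero]
      exact hMij
    rw [hPoly_eq_zero hq _ i hi hMv] at h2
    exact zero_ne_one h2
  · rintro ⟨hγ1, hblock, hbzero⟩
    subst hγ1
    -- the key set equality
    classical
    set Z : Finset (Fin m → F) :=
      Finset.univ.filter (fun P => ∀ i : Fin m, (i : ℕ) < t → P i = 0) with hZ
    set W : Finset (Fin m → F) :=
      Finset.univ.filter (fun P => ∀ i : Fin m, (i : ℕ) < t → (M.mulVec P + b) i = 0) with hW
    have hZW : Z ⊆ W := by
      intro P hP
      rw [hZ, Finset.mem_filter] at hP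
      rw [hW, Finset.mem_filter]
      refine ⟨Finset.mem_univ _, ?_⟩
      intro i hi
      simp only [Pi.add_apply, hbzero i hi, add_zero]
      rw [Matrix.mulVec, dotProduct]
      apply Finset.sum_eq_zero
      intro j _
      rcases lt_or_ge (j : ℕ) t with hj | hj
      · rw [hP.2 j hj, mul_zero]
      · rw [hblock i j hi hj, zero_mul]
    have hbij : Function.Bijective (fun P : Fin m → F => M.mulVec P + b) :=
      Finite.injective_iff_bijective.mp hinj
    have hcard : W.card = Z.card := by
      apply Finset.card_bij (fun (P : Fin m → F) _ => M.mulVec P + b)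
      · intro P hP
        rw [hW, Finset.mem_filter] at hP
        rw [hZ, Finset.mem_filter]
        exact ⟨Finset.mem_univ _, hP.2⟩
      · intro P _ Q _ h
        exact hinj h
      · intro Q hQ
        obtain ⟨P, hP⟩ := hbij.2 Q
        refine ⟨P, ?_, hP⟩
        rw [hW, Finset.mem_filter]
        refine ⟨Finset.mem_univ _, ?_⟩
        intro i hi
        rw [hZ, Finset.mem_filter] at hQ
        have hPe : M.mulVec P + b = Q := hP
        rw [hPe]
        exact hQ.2 i hi
    have hWZ : W = Z := (Finset.eq_of_subset_of_card_le hZW hcard.le).symm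
    -- conclude
    intro P
    rw [one_mul]
    by_cases hP : ∀ i : Fin m, (i : ℕ) < t → P i = 0
    · have hPW : P ∈ W := hZW (by rw [hZ, Finset.mem_filter]; exact ⟨Finset.mem_univ _, hP⟩)
      rw [hW, Finset.mem_filter] at hPW
      rw [hPoly_eq_one hq P hP, hPoly_eq_one hq _ hPW.2]
    · push_neg at hP
      obtain ⟨i, hi, hx⟩ := hP
      have hPnZ : P ∉ Z := by
        rw [hZ, Finset.mem_filter]
        intro h
        exact hx (h.2 i hi)
      have hPnW : P ∉ W := hWZ ▸ hPnZ
      rw [hW, Finset.mem_filter] at hPnW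
      push_neg at hPnW
      obtain ⟨j, hj, hMj⟩ := hPnW (Finset.mem_univ _)
      rw [hPoly_eq_zero hq P i hi hx, hPoly_eq_zero hq _ j hj hMj]
end

section
/- Let 1 ≤ t ≤ m, h_t(X) = ∏_{i=1}^{t}(1 − X_i^{q−1}), and V_q(t,m) = {(γ, σ_{A,b}) ∈ F_q^* × AGL(m, F_q) : γ·h_t(AP+b) = h_t(P) for all P ∈ F_q^m}. Then |V_q(t,m)| = q^{(t+1)(m−t)} · (∏_{i=0}^{t−1}(q^t − q^i)) · (∏_{ζ=0}^{m−t−1}(q^{m−t} − q^{ζ})). -/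
lemma hPoly_eq {F : Type*} [Field F] [Fintype F] [DecidableEq F] {q : ℕ}
    (hq : Fintype.card F = q) {m : ℕ} (t : ℕ) (x : Fin m → F) :
    hPoly F q t x = if ∀ i : Fin m, (i : ℕ) < t → x i = 0 then 1 else 0 := by
  have h2 : 2 ≤ q := hq ▸ Fintype.one_lt_card
  have key : ∀ y : F, 1 - y ^ (q - 1) = if y = 0 then 1 else 0 := by
    intro y
    by_cases hy : y = 0
    · simp [hy, zero_pow (by omega : q - 1 ≠ 0)]
    · have := FiniteField.pow_card_sub_one_eq_one y hy
      rw [hq] at this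
      simp [hy, this]
  unfold hPoly
  split_ifs with h
  · apply Finset.prod_eq_one
    intro i hi
    simp only [Finset.mem_filter, Finset.mem_univ, true_and] at hi
    rw [key, if_pos (h i hi)]
  · push_neg at h
    obtain ⟨i, hit, hxi⟩ := h
    exact Finset.prod_eq_zero (i := i) (by simp [hit]) (by rw [key, if_neg hxi])

/-- The split equivalence `Fin m ≃ Fin t ⊕ Fin (m - t)`. -/
def splitEquiv (t : ℕ) {m : ℕ} (h : t ≤ m) : Fin m ≃ Fin t ⊕ Fin (m - t) where
  toFun i := if hi : (i : ℕ) < t then .inl ⟨i, hi⟩ else .inr ⟨i - t, by omega⟩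
  invFun := Sum.elim (fun j => ⟨j, by omega⟩) (fun j => ⟨t + j, by omega⟩)
  left_inv i := by
    by_cases hi : (i : ℕ) < t <;> simp only [hi, dif_pos, dif_neg, Sum.elim_inl, Sum.elim_inr,
      not_false_iff] <;> exact Fin.ext (by simp; omega)
  right_inv j := by
    rcases j with j | j
    · simp [Fin.is_lt]
    · have : ¬ (t + (j : ℕ) < t) := by omega
      simp [this]

lemma splitEquiv_apply_lt (t : ℕ) {m : ℕ} (h : t ≤ m) (i : Fin m) (hi : (i : ℕ) < t) :
    splitEquiv t h i = Sum.inl ⟨i, hi⟩ := dif_pos hi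

lemma splitEquiv_apply_ge (t : ℕ) {m : ℕ} (h : t ≤ m) (i : Fin m) (hi : ¬ (i : ℕ) < t) :
    splitEquiv t h i = Sum.inr ⟨(i : ℕ) - t, by omega⟩ := dif_neg hi

lemma splitEquiv_symm_inl (t : ℕ) {m : ℕ} (h : t ≤ m) (j : Fin t) :
    (((splitEquiv t h).symm (Sum.inl j)) : ℕ) = (j : ℕ) := rfl

lemma splitEquiv_symm_inr (t : ℕ) {m : ℕ} (h : t ≤ m) (j : Fin (m - t)) :
    (((splitEquiv t h).symm (Sum.inr j)) : ℕ) = t + (j : ℕ) := rfl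

/-- Key entry computation for the block matrix action on the first `t` coordinates. -/
lemma block_mulVec_apply {F : Type*} [Field F] {m t : ℕ} (htm : t ≤ m)
    (A₁ : Matrix (Fin t) (Fin t) F) (C : Matrix (Fin (m - t)) (Fin t) F)
    (A₂ : Matrix (Fin (m - t)) (Fin (m - t)) F) (c : Fin (m - t) → F)
    (P : Fin m → F) (i : Fin m) (hi : (i : ℕ) < t) :
    (((Matrix.fromBlocks A₁ 0 C A₂).submatrix (splitEquiv t htm) (splitEquiv t htm)).mulVec P
        + (Sum.elim (0 : Fin t → F) c ∘ (splitEquiv t htm))) i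
      = A₁.mulVec (fun j => P ((splitEquiv t htm).symm (Sum.inl j))) ⟨i, hi⟩ := by
  set e := splitEquiv t htm with he
  have hsum : (((Matrix.fromBlocks A₁ 0 C A₂).submatrix e e).mulVec P) i
      = ∑ s : Fin t ⊕ Fin (m - t),
          (Matrix.fromBlocks A₁ 0 C A₂) (e i) (e (e.symm s)) * P (e.symm s) := by
    rw [Matrix.mulVec, dotProduct]
    simp only [Matrix.submatrix_apply]
    exact (Equiv.sum_comp e.symm
      (fun j => (Matrix.fromBlocks A₁ 0 C A₂) (e i) (e j) * P j)).symm
  simp only [Pi.add_apply, Function.comp_apply, hsum, Equiv.apply_symm_apply]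
  rw [splitEquiv_apply_lt t htm i hi]
  simp only [Fintype.sum_sum_type, Matrix.fromBlocks_apply₁₁, Matrix.fromBlocks_apply₁₂,
    Matrix.zero_apply, zero_mul, Finset.sum_const_zero, add_zero, Sum.elim_inl, Pi.zero_apply]
  rfl

/-- The forward condition: the block map preserves `hPoly`. -/
lemma block_preserves {F : Type*} [Field F] [Fintype F] [DecidableEq F] {q m t : ℕ}
    (hq : Fintype.card F = q) (htm : t ≤ m)
    (A₁ : Matrix (Fin t) (Fin t) F) (hA₁ : IsUnit A₁)
    (C : Matrix (Fin (m - t)) (Fin t) F)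
    (A₂ : Matrix (Fin (m - t)) (Fin (m - t)) F) (c : Fin (m - t) → F)
    (P : Fin m → F) :
    hPoly F q t
      (((Matrix.fromBlocks A₁ 0 C A₂).submatrix (splitEquiv t htm) (splitEquiv t htm)).mulVec P
        + (Sum.elim (0 : Fin t → F) c ∘ (splitEquiv t htm)))
      = hPoly F q t P := by
  set e := splitEquiv t htm with he
  rw [hPoly_eq hq, hPoly_eq hq]
  refine if_congr ?_ rfl rfl
  set P₁ : Fin t → F := fun j => P (e.symm (Sum.inl j)) with hP₁
  have hinj : Function.Injective A₁.mulVec := Matrix.mulVec_injective_iff_isUnit.mpr hA₁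
  constructor
  · intro h i hi
    have hz : A₁.mulVec P₁ = 0 := by
      funext j
      have hjlt : ((e.symm (Sum.inl j) : Fin m) : ℕ) < t := by
        rw [splitEquiv_symm_inl]; exact j.is_lt
      have := h (e.symm (Sum.inl j)) hjlt
      rw [block_mulVec_apply htm A₁ C A₂ c P _ hjlt] at this
      have hj : (⟨((e.symm (Sum.inl j) : Fin m) : ℕ), hjlt⟩ : Fin t) = j := by
        apply Fin.ext; rw [splitEquiv_symm_inl]
      rw [hj] at this
      exact this
    have : P₁ = 0 := hinj (by rw [hz, Matrix.mulVec_zero])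
    have hi' : e.symm (Sum.inl (⟨(i : ℕ), hi⟩ : Fin t)) = i := by
      apply Fin.ext; rw [splitEquiv_symm_inl]
    calc P i = P₁ ⟨(i : ℕ), hi⟩ := by rw [hP₁]; simp [hi']
    _ = 0 := by rw [this]; rfl
  · intro h i hi
    rw [block_mulVec_apply htm A₁ C A₂ c P i hi]
    have : P₁ = 0 := by
      funext j
      have : ((e.symm (Sum.inl j) : Fin m) : ℕ) < t := by
        rw [splitEquiv_symm_inl]; exact j.is_lt
      exact h _ this
    rw [← he, ← hP₁, this, Matrix.mulVec_zero]; rfl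

/-- The set `V_q(t,m)` of pairs `(γ, σ_{A,b}) ∈ F_q^* × AGL(m, F_q)` with
`γ·h_t(AP + b) = h_t(P)` for all `P` has cardinality
`q^{(t+1)(m-t)} · ∏_{i=0}^{t-1}(q^t - q^i) · ∏_{ζ=0}^{m-t-1}(q^{m-t} - q^ζ)`. -/
theorem card_stab_hPoly (F : Type*) [Field F] [Fintype F] [DecidableEq F] (q m t : ℕ)
    (hq : Fintype.card F = q) (ht : 1 ≤ t) (htm : t ≤ m) :
    Set.ncard {v : F × Matrix (Fin m) (Fin m) F × (Fin m → F) |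
        v.1 ≠ 0 ∧ IsUnit v.2.1 ∧
        ∀ P : Fin m → F, v.1 * hPoly F q t (v.2.1.mulVec P + v.2.2) = hPoly F q t P} =
      q ^ ((t + 1) * (m - t)) * (∏ i ∈ Finset.range t, (q ^ t - q ^ i)) *
        ∏ z ∈ Finset.range (m - t), (q ^ (m - t) - q ^ z) := by
  classical
  set e := splitEquiv t htm with he
  set Φ : (GL (Fin t) F) × (GL (Fin (m - t)) F) × Matrix (Fin (m - t)) (Fin t) F ×
      (Fin (m - t) → F) → F × Matrix (Fin m) (Fin m) F × (Fin m → F) :=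
    fun x => (1,
      (Matrix.fromBlocks (x.1 : Matrix (Fin t) (Fin t) F) 0 x.2.2.1
        (x.2.1 : Matrix (Fin (m - t)) (Fin (m - t)) F)).submatrix e e,
      Sum.elim (0 : Fin t → F) x.2.2.2 ∘ e) with hΦ
  have hinj : Function.Injective Φ := by
    rintro ⟨u₁, u₂, C, c⟩ ⟨u₁', u₂', C', c'⟩ hxy
    rw [hΦ, Prod.mk.injEq, Prod.mk.injEq] at hxy
    obtain ⟨-, hM, hb⟩ := hxy
    have hM' := congrArg (fun M => M.submatrix ⇑e.symm ⇑e.symm) hM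
    simp only [Matrix.submatrix_submatrix, Equiv.self_comp_symm, Matrix.submatrix_id_id] at hM'
    rw [Matrix.fromBlocks_inj] at hM'
    obtain ⟨h1, -, h3, h4⟩ := hM'
    have hc : c = c' := by
      funext j
      have := congrFun hb (e.symm (Sum.inr j))
      simpa using this
    exact Prod.ext (Units.ext h1) (Prod.ext (Units.ext h4) (Prod.ext h3 hc))
  have hrange : {v : F × Matrix (Fin m) (Fin m) F × (Fin m → F) |
        v.1 ≠ 0 ∧ IsUnit v.2.1 ∧
        ∀ P : Fin m → F, v.1 * hPoly F q t (v.2.1.mulVec P + v.2.2) = hPoly F q t P}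
      = Set.range Φ := by
    ext v
    constructor
    · intro hv
      obtain ⟨γ, A, b⟩ := v
      obtain ⟨hγ, hU, hP⟩ := hv
      dsimp only at hγ hU hP
      -- first: γ = 1 and b vanishes on first t coordinates
      have h0 : hPoly F q t (0 : Fin m → F) = 1 := by
        rw [hPoly_eq hq]; simp
      have hb1 : γ * hPoly F q t b = 1 := by
        have := hP 0
        rwa [Matrix.mulVec_zero, zero_add, h0] at this
      rw [hPoly_eq hq] at hb1
      by_cases hc : ∀ i : Fin m, (i : ℕ) < t → b i = 0
      case neg => rw [if_neg hc, mul_zero] at hb1; exact absurd hb1 zero_ne_one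
      rw [if_pos hc, mul_one] at hb1
      subst hb1
      -- block structure of A
      have hblock : ∀ i j : Fin m, (i : ℕ) < t → ¬ (j : ℕ) < t → A i j = 0 := by
        intro i j hi hj
        have hPj : hPoly F q t (Pi.single j (1 : F)) = 1 := by
          rw [hPoly_eq hq, if_pos]
          intro i' hi'
          exact Pi.single_eq_of_ne (fun hcon => hj (by rw [← hcon]; exact hi')) 1
        have hPP := hP (Pi.single j 1)
        rw [one_mul, hPj, hPoly_eq hq] at hPP
        split_ifs at hPP with hcc
        · have := hcc i hi
          rw [Pi.add_apply, hc i hi, add_zero, Matrix.mulVec_single] at this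
          simpa using this
        · exact absurd hPP zero_ne_one
      -- decompose A into blocks
      set M' := A.submatrix ⇑e.symm ⇑e.symm with hM'def
      have h12 : M'.toBlocks₁₂ = 0 := by
        ext i j
        have hi' : ((e.symm (Sum.inl i) : Fin m) : ℕ) < t := by
          rw [splitEquiv_symm_inl]; exact i.is_lt
        have hj' : ¬ ((e.symm (Sum.inr j) : Fin m) : ℕ) < t := by
          rw [splitEquiv_symm_inr]; omega
        exact hblock _ _ hi' hj'
      have hM' : M' = Matrix.fromBlocks M'.toBlocks₁₁ 0 M'.toBlocks₂₁ M'.toBlocks₂₂ := by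
        conv_lhs => rw [← Matrix.fromBlocks_toBlocks M']
        rw [h12]
      have hdetA : IsUnit M'.det := by
        rw [hM'def, Matrix.det_submatrix_equiv_self]
        exact (Matrix.isUnit_iff_isUnit_det A).mp hU
      rw [hM', Matrix.det_fromBlocks_zero₁₂] at hdetA
      have hdet1 : IsUnit M'.toBlocks₁₁.det := isUnit_of_mul_isUnit_left hdetA
      have hdet2 : IsUnit M'.toBlocks₂₂.det := isUnit_of_mul_isUnit_right hdetA
      have hu1 : IsUnit M'.toBlocks₁₁ := (Matrix.isUnit_iff_isUnit_det _).mpr hdet1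
      have hu2 : IsUnit M'.toBlocks₂₂ := (Matrix.isUnit_iff_isUnit_det _).mpr hdet2
      refine ⟨⟨hu1.unit, hu2.unit, M'.toBlocks₂₁, fun j => b (e.symm (Sum.inr j))⟩, ?_⟩
      rw [hΦ]
      refine Prod.ext rfl (Prod.ext ?_ ?_)
      · show (Matrix.fromBlocks (hu1.unit : Matrix (Fin t) (Fin t) F) 0 M'.toBlocks₂₁
          (hu2.unit : Matrix (Fin (m - t)) (Fin (m - t)) F)).submatrix ⇑e ⇑e = A
        rw [hu1.unit_spec, hu2.unit_spec, ← hM', hM'def,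
          Matrix.submatrix_submatrix, Equiv.symm_comp_self, Matrix.submatrix_id_id]
      · show Sum.elim (0 : Fin t → F) (fun j => b (e.symm (Sum.inr j))) ∘ ⇑e = b
        funext i
        by_cases hi : (i : ℕ) < t
        · rw [Function.comp_apply, splitEquiv_apply_lt t htm i hi, Sum.elim_inl]
          exact (hc i hi).symm
        · rw [Function.comp_apply, splitEquiv_apply_ge t htm i hi, Sum.elim_inr]
          congr 1
          rw [← splitEquiv_apply_ge t htm i hi, Equiv.symm_apply_apply]
    · rintro ⟨⟨u₁, u₂, C, c⟩, rfl⟩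
      refine ⟨one_ne_zero, ?_, ?_⟩
      · rw [Matrix.isUnit_iff_isUnit_det]
        show IsUnit ((Matrix.fromBlocks (u₁ : Matrix (Fin t) (Fin t) F) 0 C
          (u₂ : Matrix (Fin (m - t)) (Fin (m - t)) F)).submatrix ⇑e ⇑e).det
        rw [Matrix.det_submatrix_equiv_self, Matrix.det_fromBlocks_zero₁₂]
        exact (((Matrix.isUnit_iff_isUnit_det _).mp u₁.isUnit).mul
          ((Matrix.isUnit_iff_isUnit_det _).mp u₂.isUnit))
      · intro P
        rw [one_mul]
        exact block_preserves hq htm _ u₁.isUnit C _ c P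
  rw [hrange, ← Nat.card_coe_set_eq, Nat.card_range_of_injective hinj]
  rw [Nat.card_prod, Nat.card_prod, Nat.card_prod]
  have hGL1 : Nat.card (GL (Fin t) F) = ∏ i ∈ Finset.range t, (q ^ t - q ^ i) := by
    rw [Matrix.card_GL_field, hq]
    exact Fin.prod_univ_eq_prod_range (fun i => q ^ t - q ^ i) t
  have hGL2 : Nat.card (GL (Fin (m - t)) F)
      = ∏ z ∈ Finset.range (m - t), (q ^ (m - t) - q ^ z) := by
    rw [Matrix.card_GL_field, hq]
    exact Fin.prod_univ_eq_prod_range (fun i => q ^ (m - t) - q ^ i) (m - t)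
  have hMat : Nat.card (Matrix (Fin (m - t)) (Fin t) F) = q ^ ((m - t) * t) := by
    rw [Nat.card_eq_fintype_card]
    show Fintype.card (Fin (m - t) → Fin t → F) = q ^ ((m - t) * t)
    rw [Nat.mul_comm]
    simp [Fintype.card_fun, hq, ← pow_mul]
  have hVec : Nat.card (Fin (m - t) → F) = q ^ (m - t) := by
    rw [Nat.card_eq_fintype_card, Fintype.card_fun, hq, Fintype.card_fin]
  rw [hGL1, hGL2, hMat, hVec]
  have hpow : q ^ ((m - t) * t) * q ^ (m - t) = q ^ ((t + 1) * (m - t)) := by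
    rw [← pow_add]; congr 1; ring
  rw [← hpow]; ring
end

section
/- Let A = A_1 × ⋯ × A_m with A_i subfields of F_q of size d_i, d_1 ≤ ⋯ ≤ d_m, and u = ∑_{i=1}^{j}(d_i−1) + ℓ with 0 < ℓ < d_{j+1} − 1. If k_1 < k_2 are indices in the range [k_0, j+1] (where k_0 is minimal with d_{k_0} ≥ d_{j+1} − ℓ) such that d_{k_1} = d_{k_2} (i.e., t_{k_1} = t_{k_2}), then the sets N_q^{(k_1)}(u, A) and N_q^{(k_2)}(u, A) of minimum weight codewords of type k_1 and k_2 coincide. -/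
/-- The function `h_k^Ω(X) = ∏_{i ≤ j, i ≠ k} (1 - X_i^{d_i - 1}) · ∏_{ω ∈ Ω} (X_k - ω)`
(all indices 0-based). -/
def hkFun (F : Type*) [Field F] {m : ℕ} (d : ℕ → ℕ) (j : ℕ) (kf : Fin m) (Ω : Finset F)
    (x : Fin m → F) : F :=
  (∏ i ∈ Finset.univ.filter (fun i : Fin m => (i : ℕ) ≤ j ∧ i ≠ kf),
      (1 - x i ^ (d (i : ℕ) - 1))) * ∏ ω ∈ Ω, (x kf - ω)

/-- The set `N_q^{(k)}(u, A)` of codewords arising from the polynomials `h_k^Ω`, over all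
subsets `Ω ⊆ A_k` of size `d_k - (d_{j+1} - ℓ)`, via the action of `F_q^* × Aff(A)`. -/
def Nk (F : Type*) [Field F] {m L : ℕ} (K : Fin L → Subfield F) (tk : Fin m → Fin L)
    (d : ℕ → ℕ) (j ℓ : ℕ) (kf : Fin m) : Set (↥(cartSet F K tk) → F) :=
  {g | ∃ γ : F, γ ≠ 0 ∧ ∃ M : Matrix (Fin m) (Fin m) F, IsUnit M ∧ ∃ b : Fin m → F,
    Set.BijOn (fun x => M.mulVec x + b) (cartSet F K tk) (cartSet F K tk) ∧
    ∃ Ω : Finset F, (∀ ω ∈ Ω, ω ∈ K (tk kf)) ∧ Ω.card = d (kf : ℕ) - (d j - ℓ) ∧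
      ∀ x : ↥(cartSet F K tk),
        g x = γ * hkFun F d j kf Ω (M.mulVec (x : Fin m → F) + b)}

section Aux

variable (F : Type*) [Field F] {m L : ℕ}

noncomputable def swapMat (σ : Equiv.Perm (Fin m)) : Matrix (Fin m) (Fin m) F :=
  Matrix.of fun i j => if j = σ i then 1 else 0

lemma swapMat_mulVec (σ : Equiv.Perm (Fin m)) (y : Fin m → F) :
    (swapMat F σ).mulVec y = fun i => y (σ i) := by
  funext i
  simp [swapMat, Matrix.mulVec, dotProduct, ite_mul]

lemma swapMat_mul_swapMat (k₁ k₂ : Fin m) :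
    swapMat F (Equiv.swap k₁ k₂) * swapMat F (Equiv.swap k₁ k₂) = 1 := by
  ext i j
  simp only [swapMat, Matrix.mul_apply, Matrix.of_apply, ite_mul, one_mul, zero_mul]
  rw [Finset.sum_ite_eq' Finset.univ (Equiv.swap k₁ k₂ i)
    (fun k => if j = Equiv.swap k₁ k₂ k then (1 : F) else 0)]
  simp [Matrix.one_apply, Equiv.swap_apply_self, eq_comm]

/-- `hkFun` for `k₂` precomposed with the swap equals `hkFun` for `k₁`. -/
lemma hkFun_swap (d : ℕ → ℕ) (j : ℕ) (k₁ k₂ : Fin m) (Ω : Finset F)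
    (hne : k₁ ≠ k₂) (h1 : (k₁ : ℕ) ≤ j) (h2 : (k₂ : ℕ) ≤ j)
    (hdeq : d (k₁ : ℕ) = d (k₂ : ℕ)) (y : Fin m → F) :
    hkFun F d j k₂ Ω (fun i => y (Equiv.swap k₁ k₂ i)) = hkFun F d j k₁ Ω y := by
  have hdσ : ∀ i : Fin m, d ((Equiv.swap k₁ k₂ i : Fin m) : ℕ) = d (i : ℕ) := by
    intro i
    rcases eq_or_ne i k₁ with rfl | h1'
    · rw [Equiv.swap_apply_left]; exact hdeq.symm
    rcases eq_or_ne i k₂ with rfl | h2'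
    · simp [Equiv.swap_apply_right]; exact hdeq
    · rw [Equiv.swap_apply_of_ne_of_ne h1' h2']
  unfold hkFun
  congr 1
  · refine Finset.prod_nbij' (fun i => Equiv.swap k₁ k₂ i) (fun i => Equiv.swap k₁ k₂ i)
      ?_ ?_ ?_ ?_ ?_
    · intro i hi
      simp only [Finset.mem_filter, Finset.mem_univ, true_and] at hi ⊢
      constructor
      · rcases eq_or_ne i k₁ with rfl | h1'
        · rw [Equiv.swap_apply_left]; exact h2
        · rw [Equiv.swap_apply_of_ne_of_ne h1' hi.2]; exact hi.1
      · intro hc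
        have : i = k₂ := by
          have := congrArg (Equiv.swap k₁ k₂) hc
          rwa [Equiv.swap_apply_self, Equiv.swap_apply_left] at this
        exact hi.2 this
    · intro i hi
      simp only [Finset.mem_filter, Finset.mem_univ, true_and] at hi ⊢
      constructor
      · rcases eq_or_ne i k₂ with rfl | h2'
        · simp [Equiv.swap_apply_right]; exact h1
        · rw [Equiv.swap_apply_of_ne_of_ne hi.2 h2']; exact hi.1
      · intro hc
        have : i = k₁ := by
          have := congrArg (Equiv.swap k₁ k₂) hc
          rwa [Equiv.swap_apply_self, Equiv.swap_apply_right] at this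
        exact hi.2 this
    · intro i _; exact Equiv.swap_apply_self _ _ _
    · intro i _; exact Equiv.swap_apply_self _ _ _
    · intro i hi
      rw [hdσ i]
  · simp [Equiv.swap_apply_right]

lemma Nk_subset_swap (K : Fin L → Subfield F) (tk : Fin m → Fin L)
    (d : ℕ → ℕ) (j ℓ : ℕ) (k₁ k₂ : Fin m)
    (hne : k₁ ≠ k₂) (h1 : (k₁ : ℕ) ≤ j) (h2 : (k₂ : ℕ) ≤ j)
    (hteq : tk k₁ = tk k₂) (hdeq : d (k₁ : ℕ) = d (k₂ : ℕ)) :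
    Nk F K tk d j ℓ k₁ ⊆ Nk F K tk d j ℓ k₂ := by
  set σ : Equiv.Perm (Fin m) := Equiv.swap k₁ k₂ with hσ
  have htkσ : ∀ i : Fin m, tk (σ i) = tk i := by
    intro i
    rcases eq_or_ne i k₁ with rfl | h1'
    · rw [hσ, Equiv.swap_apply_left]; exact hteq.symm
    rcases eq_or_ne i k₂ with rfl | h2'
    · rw [hσ, Equiv.swap_apply_right]; exact hteq
    · rw [hσ, Equiv.swap_apply_of_ne_of_ne h1' h2']
  set P : Matrix (Fin m) (Fin m) F := swapMat F σ with hP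
  have hPv : ∀ y : Fin m → F, P.mulVec y = fun i => y (σ i) := swapMat_mulVec F σ
  have hPP : P * P = 1 := swapMat_mul_swapMat F k₁ k₂
  have hPmem : ∀ y ∈ cartSet F K tk, P.mulVec y ∈ cartSet F K tk := by
    intro y hy i
    rw [hPv]
    have := hy (σ i)
    rwa [htkσ i] at this
  have hPbij : Set.BijOn (fun y => P.mulVec y) (cartSet F K tk) (cartSet F K tk) := by
    refine ⟨hPmem, ?_, ?_⟩
    · intro y _ y' _ h
      have := congrArg (fun z => P.mulVec z) h
      simp only [Matrix.mulVec_mulVec, hPP, Matrix.one_mulVec] at this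
      exact this
    · intro z hz
      exact ⟨P.mulVec z, hPmem z hz, by
        simp only [Matrix.mulVec_mulVec, hPP, Matrix.one_mulVec]⟩
  rintro g ⟨γ, hγ, M, hM, b, hbij, Ω, hΩ1, hΩ2, hg⟩
  refine ⟨γ, hγ, P * M, (IsUnit.mul ⟨⟨P, P, hPP, hPP⟩, rfl⟩ hM), P.mulVec b, ?_, Ω, ?_, ?_, ?_⟩
  · have : (fun x => (P * M).mulVec x + P.mulVec b)
        = (fun y => P.mulVec y) ∘ (fun x => M.mulVec x + b) := by
      funext x
      simp [Matrix.mulVec_mulVec, Matrix.mulVec_add]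
    rw [this]
    exact hPbij.comp hbij
  · intro ω hω
    rw [← hteq]; exact hΩ1 ω hω
  · rw [← hdeq]; exact hΩ2
  · intro x
    rw [hg x]
    congr 1
    have hy : (P * M).mulVec (x : Fin m → F) + P.mulVec b
        = P.mulVec (M.mulVec (x : Fin m → F) + b) := by
      simp [Matrix.mulVec_mulVec, Matrix.mulVec_add]
    rw [hy, hPv]
    exact (hkFun_swap F d j k₁ k₂ Ω hne h1 h2 hdeq _).symm

end Aux

/-- If `k₁ < k₂` are valid indices with `t_{k₁} = t_{k₂}` (so `d_{k₁} = d_{k₂}`), the sets of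
minimum weight codewords of types `k₁` and `k₂` coincide. -/
theorem Nk_eq_of_tk_eq
    (F : Type*) [Field F] [Fintype F] (q : ℕ) (hq : Fintype.card F = q)
    (L m : ℕ) (K : Fin L → Subfield F)
    (hK : ∀ t t' : Fin L, t < t' → K t < K t')
    (μ : Fin L → ℕ) (hμ : ∀ t, 1 ≤ μ t)
    (s : ℕ → ℕ) (hs0 : s 0 = 0) (hsrec : ∀ t : Fin L, s ((t : ℕ) + 1) = s (t : ℕ) + μ t)
    (hm : m = s L)
    (tk : Fin m → Fin L)
    (htk : ∀ i : Fin m, s ((tk i : ℕ)) ≤ (i : ℕ) ∧ (i : ℕ) < s ((tk i : ℕ) + 1))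
    (d : ℕ → ℕ) (hd : ∀ i : Fin m, d (i : ℕ) = Nat.card (K (tk i)))
    (u j ℓ : ℕ) (hj : j < m) (hℓ : 0 < ℓ) (hℓ' : ℓ < d j - 1)
    (hu : u = (∑ i ∈ Finset.range j, (d i - 1)) + ℓ)
    (k₁ k₂ : Fin m) (hk12 : k₁ < k₂) (hk2 : (k₂ : ℕ) ≤ j)
    (hk1d : d j - ℓ ≤ d (k₁ : ℕ)) (hteq : tk k₁ = tk k₂) :
    Nk F K tk d j ℓ k₁ = Nk F K tk d j ℓ k₂ := by
  have hne : k₁ ≠ k₂ := ne_of_lt hk12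
  have h1 : (k₁ : ℕ) ≤ j := le_trans (le_of_lt hk12) hk2
  have hdeq : d (k₁ : ℕ) = d (k₂ : ℕ) := by rw [hd k₁, hd k₂, hteq]
  exact Set.Subset.antisymm
    (Nk_subset_swap F K tk d j ℓ k₁ k₂ hne h1 hk2 hteq hdeq)
    (Nk_subset_swap F K tk d j ℓ k₂ k₁ hne.symm hk2 h1 hteq.symm hdeq.symm)
end

section
/- With the setting of nested-subfield affine Cartesian codes and u = ∑_{i=1}^{j}(d_i−1) + ℓ, 0 < ℓ < d_{j+1} − 1: if k_1 < k_2 are valid indices with t_{k_1} < t_{k_2} (i.e., d_{k_1} < d_{k_2}), then N_q^{(k_1)}(u, A) ∩ N_q^{(k_2)}(u, A) = ∅. -/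
/-- If `k₁ < k₂` are valid indices with `t_{k₁} < t_{k₂}` (so `d_{k₁} < d_{k₂}`), then the sets
of minimum weight codewords of types `k₁` and `k₂` are disjoint. -/
theorem Nk_disjoint_of_tk_lt
    (F : Type*) [Field F] [Fintype F] (q : ℕ) (hq : Fintype.card F = q)
    (L m : ℕ) (K : Fin L → Subfield F)
    (hK : ∀ t t' : Fin L, t < t' → K t < K t')
    (μ : Fin L → ℕ) (hμ : ∀ t, 1 ≤ μ t)
    (s : ℕ → ℕ) (hs0 : s 0 = 0) (hsrec : ∀ t : Fin L, s ((t : ℕ) + 1) = s (t : ℕ) + μ t)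
    (hm : m = s L)
    (tk : Fin m → Fin L)
    (htk : ∀ i : Fin m, s ((tk i : ℕ)) ≤ (i : ℕ) ∧ (i : ℕ) < s ((tk i : ℕ) + 1))
    (d : ℕ → ℕ) (hd : ∀ i : Fin m, d (i : ℕ) = Nat.card (K (tk i)))
    (u j ℓ : ℕ) (hj : j < m) (hℓ : 0 < ℓ) (hℓ' : ℓ < d j - 1)
    (hu : u = (∑ i ∈ Finset.range j, (d i - 1)) + ℓ)
    (k₁ k₂ : Fin m) (hk12 : k₁ < k₂) (hk2 : (k₂ : ℕ) ≤ j)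
    (hk1d : d j - ℓ ≤ d (k₁ : ℕ)) (hk2d : d j - ℓ ≤ d (k₂ : ℕ)) (htlt : tk k₁ < tk k₂) :
    Nk F K tk d j ℓ k₁ ∩ Nk F K tk d j ℓ k₂ = ∅ := by
  classical
  rw [Set.eq_empty_iff_forall_notMem]
  rintro g ⟨⟨γ₁, hγ₁, M₁, hM₁, b₁, hbij₁, Ω₁, hΩ₁K, hΩ₁c, heq₁⟩,
            ⟨γ₂, hγ₂, M₂, hM₂, b₂, hbij₂, Ω₂, hΩ₂K, hΩ₂c, heq₂⟩⟩
  -- every block field has at least two elements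
  have hd2 : ∀ i : Fin m, 2 ≤ d (i : ℕ) := by
    intro i
    rw [hd i, Nat.card_eq_fintype_card]
    exact Fintype.one_lt_card
  -- nonzero elements of a block field have x ^ (dᵢ - 1) = 1
  have hpow : ∀ (i : Fin m) (x : F), x ∈ K (tk i) → x ≠ 0 → x ^ (d (i : ℕ) - 1) = 1 := by
    intro i x hx hx0
    have hne : (⟨x, hx⟩ : K (tk i)) ≠ 0 := fun h => hx0 (congrArg Subtype.val h)
    have h1 := FiniteField.pow_card_sub_one_eq_one (⟨x, hx⟩ : K (tk i)) hne
    have hcard : d (i : ℕ) = Fintype.card (K (tk i)) := by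
      rw [hd i, Nat.card_eq_fintype_card]
    rw [← hcard] at h1
    have h2 := congrArg Subtype.val h1
    simpa using h2
  -- s is monotone
  have smon : ∀ a b : ℕ, a ≤ b → b ≤ L → s a ≤ s b := by
    intro a b hab hbL
    induction b, hab using Nat.le_induction with
    | base => exact le_rfl
    | succ n hn ih =>
      have hnL : n < L := by omega
      have h1 := hsrec ⟨n, hnL⟩
      have h2 := ih (by omega)
      simp only [] at h1
      omega
  -- coordinates past j live in fields containing K (tk k₂)
  have tkmono : ∀ i : Fin m, (j : ℕ) < (i : ℕ) → K (tk k₂) ≤ K (tk i) := by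
    intro i hij
    rcases lt_or_ge (tk i) (tk k₂) with h | h
    · exfalso
      have h1 := (htk i).2
      have h2 := (htk k₂).1
      have hlt : (tk i : ℕ) < (tk k₂ : ℕ) := h
      have h3 := smon ((tk i : ℕ) + 1) (tk k₂ : ℕ) (by omega) (tk k₂).isLt.le
      omega
    · rcases eq_or_lt_of_le h with h' | h'
      · rw [h']
      · exact (hK _ _ h').le
  -- choose two distinct admissible values a₁ a₂ in K (tk k₁) \ Ω₁
  have hKf : ((K (tk k₁) : Set F)).toFinset.card = d (k₁ : ℕ) := by
    rw [Set.toFinset_card, ← Nat.card_eq_fintype_card, hd k₁]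
    rfl
  have htwo : 1 < (((K (tk k₁) : Set F)).toFinset \ Ω₁).card := by
    have h1 := Finset.card_le_card_sdiff_add_card
      (s := ((K (tk k₁) : Set F)).toFinset) (t := Ω₁)
    omega
  obtain ⟨a₁, ha₁, a₂, ha₂, hane⟩ := Finset.one_lt_card.mp htwo
  rw [Finset.mem_sdiff, Set.mem_toFinset] at ha₁ ha₂
  -- the main construction: for admissible a, a preimage point where g ≠ 0,
  -- whose image under the second affine map vanishes off coordinate k₂ in the first block
  have main : ∀ a : F, a ∈ K (tk k₁) → a ∉ Ω₁ →
      ∃ x, x ∈ cartSet F K tk ∧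
        (M₁.mulVec x + b₁ = fun i => if i = k₁ then a else 0) ∧
        ∀ i : Fin m, (i : ℕ) ≤ j → i ≠ k₂ → (M₂.mulVec x + b₂) i = 0 := by
    intro a haK haΩ
    have hyA : (fun i => if i = k₁ then a else 0) ∈ cartSet F K tk := by
      intro i
      by_cases h : i = k₁
      · subst h; simpa using haK
      · simp [h]
    obtain ⟨x, hxA, hx⟩ := hbij₁.surjOn hyA
    have hx' : M₁.mulVec x + b₁ = fun i => if i = k₁ then a else 0 := hx
    refine ⟨x, hxA, hx', ?_⟩
    have hg1 : g ⟨x, hxA⟩ ≠ 0 := by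
      have hgv : g ⟨x, hxA⟩ =
          γ₁ * hkFun F d j k₁ Ω₁ (fun i => if i = k₁ then a else 0) := by
        rw [heq₁ ⟨x, hxA⟩]
        show γ₁ * hkFun F d j k₁ Ω₁ (M₁.mulVec x + b₁) = _
        rw [hx']
      rw [hgv]
      unfold hkFun
      apply mul_ne_zero hγ₁
      apply mul_ne_zero
      · rw [Finset.prod_eq_one]
        · exact one_ne_zero
        intro i hi
        rw [Finset.mem_filter] at hi
        have hz : (fun i : Fin m => if i = k₁ then a else 0) i = 0 := if_neg hi.2.2
        rw [hz, zero_pow (by have := hd2 i; omega), sub_zero]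
      · rw [Finset.prod_ne_zero_iff]
        intro ω hω
        have hz : (fun i : Fin m => if i = k₁ then a else 0) k₁ = a := if_pos rfl
        rw [hz]
        exact sub_ne_zero_of_ne (fun h => haΩ (h ▸ hω))
    intro i hij hik
    by_contra hwi
    apply hg1
    rw [heq₂ ⟨x, hxA⟩]
    show γ₂ * hkFun F d j k₂ Ω₂ (M₂.mulVec x + b₂) = 0
    have hw : (fun z => M₂.mulVec z + b₂) x ∈ cartSet F K tk := hbij₂.mapsTo hxA
    have hfac : (1 : F) - ((M₂.mulVec x + b₂) i) ^ (d (i : ℕ) - 1) = 0 := by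
      rw [hpow i _ (hw i) hwi, sub_self]
    unfold hkFun
    rw [Finset.prod_eq_zero (Finset.mem_filter.mpr ⟨Finset.mem_univ i, hij, hik⟩) hfac,
      zero_mul, mul_zero]
  obtain ⟨x₁, hx₁A, hx₁eq, hw₁z⟩ := main a₁ ha₁.1 ha₁.2
  obtain ⟨x₂, hx₂A, hx₂eq, hw₂z⟩ := main a₂ ha₂.1 ha₂.2
  -- M₂ acts injectively on vectors
  have hB : (↑hM₂.unit⁻¹ : Matrix (Fin m) (Fin m) F) * M₂ = 1 :=
    hM₂.val_inv_mul
  have hMinj : Function.Injective M₂.mulVec := by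
    intro v v' hvv
    have h := congrArg ((↑hM₂.unit⁻¹ : Matrix (Fin m) (Fin m) F).mulVec) hvv
    rwa [Matrix.mulVec_mulVec, Matrix.mulVec_mulVec, hB, Matrix.one_mulVec,
      Matrix.one_mulVec] at h
  -- key claim: K (tk k₂) multiples of a₁ - a₂ land in K (tk k₁)
  have key : ∀ lam : F, lam ∈ K (tk k₂) → lam * (a₁ - a₂) ∈ K (tk k₁) := by
    intro lam hlam
    have hWA : (fun i => (M₂.mulVec x₂ + b₂) i +
        lam * ((M₂.mulVec x₁ + b₂) i - (M₂.mulVec x₂ + b₂) i)) ∈ cartSet F K tk := by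
      intro i
      rcases le_or_gt (i : ℕ) j with hij | hij
      · by_cases hik : i = k₂
        · subst hik
          exact add_mem ((hbij₂.mapsTo hx₂A) i)
            (mul_mem hlam (sub_mem ((hbij₂.mapsTo hx₁A) i) ((hbij₂.mapsTo hx₂A) i)))
        · have h1 := hw₁z i hij hik
          have h2 := hw₂z i hij hik
          simp only [h1, h2, sub_zero, mul_zero, add_zero]
          exact zero_mem _
      · exact add_mem ((hbij₂.mapsTo hx₂A) i)
          (mul_mem (tkmono i hij hlam)
            (sub_mem ((hbij₂.mapsTo hx₁A) i) ((hbij₂.mapsTo hx₂A) i)))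
    obtain ⟨x₃, hx₃A, hx₃⟩ := hbij₂.surjOn hWA
    have hx₃' : M₂.mulVec x₃ + b₂ = fun i => (M₂.mulVec x₂ + b₂) i +
        lam * ((M₂.mulVec x₁ + b₂) i - (M₂.mulVec x₂ + b₂) i) := hx₃
    have hx₃eq : x₃ = x₂ + lam • (x₁ - x₂) := by
      apply hMinj
      have h2 : M₂.mulVec (x₂ + lam • (x₁ - x₂)) =
          M₂.mulVec x₂ + lam • (M₂.mulVec x₁ - M₂.mulVec x₂) := by
        rw [Matrix.mulVec_add, Matrix.mulVec_smul, Matrix.mulVec_sub]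
      rw [h2]
      funext i
      have h1 := congrFun hx₃' i
      simp only [Pi.add_apply, Pi.smul_apply, Pi.sub_apply, smul_eq_mul] at h1 ⊢
      linear_combination h1
    have hy₃ : M₁.mulVec x₃ + b₁ ∈ cartSet F K tk := hbij₁.mapsTo hx₃A
    have hcomp : M₁.mulVec x₃ + b₁ = fun i =>
        (if i = k₁ then a₂ else 0) +
          lam * ((if i = k₁ then a₁ else 0) - (if i = k₁ then a₂ else 0)) := by
      rw [hx₃eq, Matrix.mulVec_add, Matrix.mulVec_smul, Matrix.mulVec_sub]
      funext i
      have e1 := congrFun hx₁eq i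
      have e2 := congrFun hx₂eq i
      simp only [Pi.add_apply, Pi.smul_apply, Pi.sub_apply, smul_eq_mul] at e1 e2 ⊢
      linear_combination (1 - lam) * e2 + lam * e1
    rw [hcomp] at hy₃
    have hco := hy₃ k₁
    simp only [if_pos rfl] at hco
    have h3 := sub_mem hco ha₂.1
    simpa using h3
  -- build an injection from K (tk k₂) into K (tk k₁)
  have hanz : a₁ - a₂ ≠ 0 := sub_ne_zero_of_ne hane
  have hinj : Function.Injective
      (fun t : ↥(K (tk k₂)) => (⟨(t : F) * (a₁ - a₂), key t t.2⟩ : ↥(K (tk k₁)))) := by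
    intro t t' h
    have h' := congrArg Subtype.val h
    simp only [] at h'
    exact Subtype.ext (mul_right_cancel₀ hanz h')
  have hle := Nat.card_le_card_of_injective _ hinj
  have hlt : Nat.card ↥(K (tk k₁)) < Nat.card ↥(K (tk k₂)) := by
    have h := hK _ _ htlt
    rw [lt_iff_le_not_ge] at h
    have hss : (K (tk k₁) : Set F) ⊂ (K (tk k₂) : Set F) := by
      constructor
      · intro x hx
        exact h.1 hx
      · intro hsub
        exact h.2 (fun x hx => hsub hx)
    have h4 := Set.ncard_lt_ncard hss (Set.toFinite _)
    rw [← Nat.card_coe_set_eq, ← Nat.card_coe_set_eq] at h4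
    exact h4
  omega
end

section
/- In the setting of the stabilizer of h_k^Ω for nested-subfield affine Cartesian codes, if (γ, σ_{A,b}) stabilizes the codeword of h_k^Ω, then a_{i,ζ} = 0 for all s_{r−1} < i ≤ j+1 and j+2 ≤ ζ ≤ s_r, where r = t_{j+1}. -/
/-- If `(γ, σ_{M,b})` stabilizes the codeword of `h_k^Ω`, then `M_{i,ζ} = 0` for all
`s_{r-1} < i ≤ j+1` and `j+2 ≤ ζ ≤ s_r` (1-indexed), where `r = t_{j+1}`. -/
theorem stab_hkOmega_block_zero
    (F : Type*) [Field F] [Fintype F] (q : ℕ) (hq : Fintype.card F = q)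
    (L m : ℕ) (K : Fin L → Subfield F)
    (hK : ∀ t t' : Fin L, t < t' → K t < K t')
    (μ : Fin L → ℕ) (hμ : ∀ t, 1 ≤ μ t)
    (s : ℕ → ℕ) (hs0 : s 0 = 0) (hsrec : ∀ t : Fin L, s ((t : ℕ) + 1) = s (t : ℕ) + μ t)
    (hm : m = s L)
    (tk : Fin m → Fin L)
    (htk : ∀ i : Fin m, s ((tk i : ℕ)) ≤ (i : ℕ) ∧ (i : ℕ) < s ((tk i : ℕ) + 1))
    (d : ℕ → ℕ) (hd : ∀ i : Fin m, d (i : ℕ) = Nat.card (K (tk i)))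
    (u j ℓ : ℕ) (hj : j < m) (hℓ : 0 < ℓ) (hℓ' : ℓ ≤ d j - 1)
    (hu : u = (∑ i ∈ Finset.range j, (d i - 1)) + ℓ)
    (kf : Fin m) (hk : (kf : ℕ) ≤ j) (hkd : d j - ℓ ≤ d (kf : ℕ))
    (Ω : Finset F) (hΩ : ∀ ω ∈ Ω, ω ∈ K (tk kf)) (hΩcard : Ω.card = d (kf : ℕ) - (d j - ℓ))
    (γ : F) (hγ : γ ≠ 0)
    (M : Matrix (Fin m) (Fin m) F) (hM : IsUnit M)
    (hG : ∀ i jj : Fin m, M i jj ∈ K (tk i) ∧ (s ((tk i : ℕ) + 1) ≤ (jj : ℕ) → M i jj = 0))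
    (b : Fin m → F) (hb : b ∈ cartSet F K tk)
    (hstab : ∀ P ∈ cartSet F K tk,
      γ * hkFun F d j kf Ω (M.mulVec P + b) = hkFun F d j kf Ω P) :
    ∀ i ζ : Fin m, s ((tk ⟨j, hj⟩ : ℕ)) ≤ (i : ℕ) → (i : ℕ) ≤ j →
      j + 1 ≤ (ζ : ℕ) → (ζ : ℕ) < s ((tk ⟨j, hj⟩ : ℕ) + 1) → M i ζ = 0 := by
  classical
  -- monotonicity of `s`
  have smono : ∀ b' : ℕ, b' ≤ L → ∀ a : ℕ, a ≤ b' → s a ≤ s b' := by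
    intro b'
    induction b' with
    | zero =>
      intro _ a ha
      have : a = 0 := by omega
      subst this; exact le_rfl
    | succ n ih =>
      intro hb' a ha
      have h2 : s (n + 1) = s n + μ ⟨n, by omega⟩ := hsrec ⟨n, by omega⟩
      rcases Nat.eq_or_lt_of_le ha with h | h
      · exact h ▸ le_rfl
      · have := ih (by omega) a (by omega)
        omega
  -- block determination
  have hblock : ∀ (n : Fin m) (t : Fin L), s (t : ℕ) ≤ (n : ℕ) → (n : ℕ) < s ((t : ℕ) + 1) →
      tk n = t := by
    intro n t h1 h2
    obtain ⟨ha, hb'⟩ := htk n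
    by_contra hne
    rcases (Ne.lt_or_gt hne) with hlt | hlt
    · have hv : (tk n : ℕ) < (t : ℕ) := hlt
      have := smono (t : ℕ) t.isLt.le ((tk n : ℕ) + 1) (by omega)
      omega
    · have hv : (t : ℕ) < (tk n : ℕ) := hlt
      have := smono ((tk n : ℕ)) (tk n).isLt.le ((t : ℕ) + 1) (by omega)
      omega
  -- cardinality of subfields
  have hcard2 : ∀ t : Fin L, 2 ≤ Nat.card (K t) := by
    intro t
    haveI : Fintype (K t) := Fintype.ofFinite _
    rw [Nat.card_eq_fintype_card]
    exact Fintype.one_lt_card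
  have hd2 : ∀ n : Fin m, 2 ≤ d (n : ℕ) := fun n => (hd n) ▸ hcard2 (tk n)
  -- Fermat's little theorem in each subfield
  have hpow : ∀ (n : Fin m) (x : F), x ∈ K (tk n) → x ≠ 0 → x ^ (d (n : ℕ) - 1) = 1 := by
    intro n x hx hx0
    rw [hd n]
    haveI : Fintype (K (tk n)) := Fintype.ofFinite _
    have h1 : (⟨x, hx⟩ : K (tk n)) ≠ 0 := fun h => hx0 (congrArg Subtype.val h)
    have h2 := FiniteField.pow_card_sub_one_eq_one (⟨x, hx⟩ : K (tk n)) h1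
    have h3 : Nat.card (K (tk n)) = Fintype.card (K (tk n)) := Nat.card_eq_fintype_card
    have h4 : x ^ (Fintype.card (K (tk n)) - 1) = 1 := by
      simpa using congrArg (fun y : K (tk n) => (y : F)) h2
    rw [h3]; exact h4
  have hfac : ∀ (n : Fin m) (y : F), y ∈ K (tk n) → 1 - y ^ (d (n : ℕ) - 1) ≠ 0 → y = 0 := by
    intro n y hy h
    by_contra hy0
    exact h (by rw [hpow n y hy hy0]; ring)
  -- the affine map preserves the Cartesian set
  have hσ : ∀ P ∈ cartSet F K tk, (M.mulVec P + b) ∈ cartSet F K tk := by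
    intro P hP n
    have hsum : M.mulVec P n ∈ K (tk n) := by
      show (∑ x, M n x * P x) ∈ K (tk n)
      apply sum_mem
      intro x _
      by_cases hx : s ((tk n : ℕ) + 1) ≤ (x : ℕ)
      · rw [(hG n x).2 hx, zero_mul]; exact zero_mem _
      · apply mul_mem (hG n x).1
        have hxn : tk x ≤ tk n := by
          by_contra hlt
          push_neg at hlt
          have hv : (tk n : ℕ) < (tk x : ℕ) := hlt
          have := smono ((tk x : ℕ)) (tk x).isLt.le ((tk n : ℕ) + 1) (by omega)
          have := (htk x).1
          omega
        rcases eq_or_lt_of_le hxn with he | hl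
        · exact he ▸ hP x
        · exact (hK _ _ hl).le (hP x)
    exact add_mem hsum (hb n)
  -- main argument
  intro i ζ hi1 hi2 hζ1 hζ2
  obtain ⟨hjr1, hjr2⟩ := htk ⟨j, hj⟩
  have htki : tk i = tk ⟨j, hj⟩ := hblock i _ hi1 (by omega)
  have htkζ : tk ζ = tk ⟨j, hj⟩ := hblock ζ _ (by omega) hζ2
  have hkζ : kf ≠ ζ := by
    intro h; rw [h] at hk; omega
  -- pick ω0 ∈ K (tk kf) \ Ω
  have hfinK : ((K (tk kf) : Set F)).Finite := Set.toFinite _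
  set Kfin : Finset F := hfinK.toFinset with hKfin
  have hKfincard : Kfin.card = d (kf : ℕ) := by
    have hnc : Nat.card (K (tk kf)) = ((K (tk kf) : Set F)).ncard := Nat.card_coe_set_eq _
    rw [hd kf, hnc, Set.ncard_eq_toFinset_card _ hfinK]
  have hΩsub : Ω ⊆ Kfin := fun ω hω => hfinK.mem_toFinset.mpr (hΩ ω hω)
  have hdkf2 : 2 ≤ d (kf : ℕ) := hd2 kf
  have hdj2 : 2 ≤ d j := hd2 ⟨j, hj⟩
  have hΩlt : Ω.card < Kfin.card := by
    rw [hΩcard, hKfincard]; omega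
  have hnonempty : (Kfin \ Ω).Nonempty := by
    rw [← Finset.card_pos, Finset.card_sdiff_of_subset hΩsub]; omega
  obtain ⟨ω0, hω0⟩ := hnonempty
  rw [Finset.mem_sdiff] at hω0
  have hω0K : ω0 ∈ K (tk kf) := hfinK.mem_toFinset.mp hω0.1
  have hω0Ω : ω0 ∉ Ω := hω0.2
  -- the test points
  have hPA : ∀ t : F, t ∈ K (tk ⟨j, hj⟩) →
      (Pi.single kf ω0 + Pi.single ζ t) ∈ cartSet F K tk := by
    intro t ht n
    rw [Pi.add_apply]
    by_cases h1 : n = kf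
    · subst h1
      rw [Pi.single_eq_same, Pi.single_eq_of_ne hkζ, add_zero]
      exact hω0K
    · rw [Pi.single_eq_of_ne h1, zero_add]
      by_cases h2 : n = ζ
      · subst h2
        rw [Pi.single_eq_same, htkζ]
        exact ht
      · rw [Pi.single_eq_of_ne h2]
        exact zero_mem _
  have hQval : ∀ (t : F) (n : Fin m),
      (M.mulVec (Pi.single kf ω0 + Pi.single ζ t) + b) n = M n kf * ω0 + M n ζ * t + b n := by
    intro t n
    rw [Pi.add_apply, Matrix.mulVec_add, Pi.add_apply, Matrix.mulVec_single,
      Matrix.mulVec_single]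
    rfl
  have hPne : ∀ t : F, hkFun F d j kf Ω (Pi.single kf ω0 + Pi.single ζ t) ≠ 0 := by
    intro t
    unfold hkFun
    apply mul_ne_zero
    · rw [Finset.prod_eq_one]
      · exact one_ne_zero
      intro n hn
      rw [Finset.mem_filter] at hn
      have hnζ : n ≠ ζ := by
        intro h
        rw [h] at hn
        omega
      have hval : ((Pi.single kf ω0 + Pi.single ζ t : Fin m → F)) n = 0 := by
        rw [Pi.add_apply, Pi.single_eq_of_ne hn.2.2, Pi.single_eq_of_ne hnζ, add_zero]
      rw [hval, zero_pow (by have := hd2 n; omega), sub_zero]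
    · rw [Finset.prod_ne_zero_iff]
      intro ω hω
      have hv : ((Pi.single kf ω0 + Pi.single ζ t : Fin m → F)) kf = ω0 := by
        rw [Pi.add_apply, Pi.single_eq_same, Pi.single_eq_of_ne hkζ, add_zero]
      rw [hv]
      exact sub_ne_zero_of_ne (fun h => hω0Ω (h ▸ hω))
  have hQne : ∀ t : F, t ∈ K (tk ⟨j, hj⟩) →
      hkFun F d j kf Ω (M.mulVec (Pi.single kf ω0 + Pi.single ζ t) + b) ≠ 0 := by
    intro t ht h0
    have hst := hstab _ (hPA t ht)
    rw [h0, mul_zero] at hst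
    exact hPne t hst.symm
  by_cases hik : i = kf
  · -- case i = kf
    subst hik
    by_contra hc
    have htkkf : tk i = tk ⟨j, hj⟩ := htki
    have hdkj : d (i : ℕ) = d j := by
      rw [hd i, htkkf, ← hd ⟨j, hj⟩]
    have hΩc : Ω.card = ℓ := by
      rw [hΩcard, hdkj]; omega
    have key : ∀ t : F, t ∈ K (tk ⟨j, hj⟩) →
        (M i i * ω0 + M i ζ * t + b i) ∈ Kfin \ Ω := by
      intro t ht
      rw [Finset.mem_sdiff]
      constructor
      · apply hfinK.mem_toFinset.mpr
        have h4 := hσ _ (hPA t ht) i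
        rw [hQval t i] at h4
        exact h4
      · intro hmem
        have h1 := hQne t ht
        unfold hkFun at h1
        have h2 := (mul_ne_zero_iff.mp h1).2
        rw [Finset.prod_ne_zero_iff] at h2
        have h3 := h2 _ hmem
        apply h3
        rw [hQval t i]
        ring
    have hinj : Set.InjOn (fun t => M i i * ω0 + M i ζ * t + b i) Kfin := by
      intro a _ b' _ hab
      simp only at hab
      have : M i ζ * a = M i ζ * b' := by linear_combination hab
      exact mul_left_cancel₀ hc this
    have himg : Finset.image (fun t => M i i * ω0 + M i ζ * t + b i) Kfin ⊆ Kfin \ Ω := by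
      intro y hy
      obtain ⟨t, htK, rfl⟩ := Finset.mem_image.mp hy
      apply key t
      have ht' : t ∈ K (tk i) := hfinK.mem_toFinset.mp htK
      rwa [htkkf] at ht'
    have hcard1 : (Finset.image (fun t => M i i * ω0 + M i ζ * t + b i) Kfin).card = Kfin.card :=
      Finset.card_image_of_injOn hinj
    have hcard2' := Finset.card_le_card himg
    rw [hcard1, Finset.card_sdiff_of_subset hΩsub, hΩc] at hcard2'
    omega
  · -- case i ≠ kf
    have key : ∀ t : F, t ∈ K (tk ⟨j, hj⟩) → M i kf * ω0 + M i ζ * t + b i = 0 := by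
      intro t ht
      have h1 := hQne t ht
      unfold hkFun at h1
      have h2 := (mul_ne_zero_iff.mp h1).1
      rw [Finset.prod_ne_zero_iff] at h2
      have h3 := h2 i (Finset.mem_filter.mpr ⟨Finset.mem_univ _, hi2, hik⟩)
      have h4 : (M.mulVec (Pi.single kf ω0 + Pi.single ζ t) + b) i ∈ K (tk i) :=
        hσ _ (hPA t ht) i
      have h5 := hfac i _ h4 h3
      rw [hQval t i] at h5
      exact h5
    have k0 := key 0 (zero_mem _)
    have k1 := key 1 (one_mem _)
    have : M i ζ = M i ζ * 1 - M i ζ * 0 := by ring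
    rw [this]
    linear_combination k1 - k0
end

section
/- Let A = F_2 × F_2 × F_4 ⊆ F_4^3. Then the affine Cartesian code AC_4(4, A) has minimum distance 2 and exactly 360 minimum weight codewords. -/
set_option linter.unusedSectionVars false

open MvPolynomial Finset

namespace AC4proof

variable {F : Type*} [Field F] [Fintype F]

def ACset (F : Type*) [Field F] : Set (Fin 3 → F) :=
  {x : Fin 3 → F | x 0 ^ 2 = x 0 ∧ x 1 ^ 2 = x 1}

noncomputable instance : Fintype ↥(ACset F) := Fintype.ofFinite _

lemma two_zero (hF : Fintype.card F = 4) : (2 : F) = 0 := by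
  have h4 : ((Fintype.card F : ℕ) : F) = 0 := FiniteField.cast_card_eq_zero F
  rw [hF] at h4
  have h : (2 : F) * 2 = 0 := by push_cast at h4; linear_combination h4
  exact mul_self_eq_zero.mp h

lemma pow4 (hF : Fintype.card F = 4) (a : F) : a ^ 4 = a := by
  rw [← hF]; exact FiniteField.pow_card a

def pt (b : Bool × Bool × F) : Fin 3 → F :=
  ![bif b.1 then 1 else 0, bif b.2.1 then 1 else 0, b.2.2]

lemma pt_mem (b : Bool × Bool × F) : pt b ∈ ACset F := by
  obtain ⟨b0, b1, t⟩ := b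
  constructor <;> cases b0 <;> cases b1 <;> simp [pt, ACset]

noncomputable def ptA (b : Bool × Bool × F) : ↥(ACset F) := ⟨pt b, pt_mem b⟩

lemma ptA_bij : Function.Bijective (ptA (F := F)) := by
  constructor
  · rintro ⟨b0, b1, t⟩ ⟨c0, c1, s⟩ h
    have h0 := congrFun (congrArg Subtype.val h) 0
    have h1 := congrFun (congrArg Subtype.val h) 1
    have h2 := congrFun (congrArg Subtype.val h) 2
    simp [ptA, pt] at h0 h1 h2
    cases b0 <;> cases c0 <;> cases b1 <;> cases c1 <;> simp_all
  · rintro ⟨x, hx0, hx1⟩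
    have e0 : x 0 = 0 ∨ x 0 = 1 := by
      rcases mul_eq_zero.mp (show x 0 * (x 0 - 1) = 0 by linear_combination hx0) with h | h
      · exact Or.inl h
      · exact Or.inr (sub_eq_zero.mp h)
    have e1 : x 1 = 0 ∨ x 1 = 1 := by
      rcases mul_eq_zero.mp (show x 1 * (x 1 - 1) = 0 by linear_combination hx1) with h | h
      · exact Or.inl h
      · exact Or.inr (sub_eq_zero.mp h)
    obtain ⟨b0, hb0⟩ : ∃ b : Bool, (bif b then (1:F) else 0) = x 0 := by
      rcases e0 with h | h
      · exact ⟨false, h.symm⟩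
      · exact ⟨true, h.symm⟩
    obtain ⟨b1, hb1⟩ : ∃ b : Bool, (bif b then (1:F) else 0) = x 1 := by
      rcases e1 with h | h
      · exact ⟨false, h.symm⟩
      · exact ⟨true, h.symm⟩
    refine ⟨(b0, b1, x 2), ?_⟩
    apply Subtype.ext
    funext i
    fin_cases i
    · simpa [ptA, pt] using hb0
    · simpa [ptA, pt] using hb1
    · simp [ptA, pt]

noncomputable def eA : (Bool × Bool × F) ≃ ↥(ACset F) := Equiv.ofBijective _ ptA_bij

lemma sum_A (φ : (Fin 3 → F) → F) :
    ∑ x : ↥(ACset F), φ ↑x = ∑ b : Bool × Bool × F, φ (pt b) :=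
  (Equiv.sum_comp eA (fun x : ↥(ACset F) => φ ↑x)).symm

lemma card_A (hF : Fintype.card F = 4) : Nat.card ↥(ACset F) = 16 := by
  rw [← Nat.card_congr (eA (F := F))]
  simp [Nat.card_eq_fintype_card, hF]

lemma sum_monomial_zero (hF : Fintype.card F = 4) (m : Fin 3 →₀ ℕ) (h0 : m 0 ≤ 1)
    (h1 : m 1 ≤ 1) (h2 : m 2 ≤ 3) (htot : m 0 + m 1 + m 2 ≤ 4) :
    ∑ x : ↥(ACset F), (∏ i, (x : Fin 3 → F) i ^ m i) = 0 := by
  rw [sum_A (fun y => ∏ i, y i ^ m i)]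
  have key : ∀ b : Bool × Bool × F, ∏ i, pt b i ^ m i
      = (bif b.1 then (1:F) else 0) ^ m 0 *
        ((bif b.2.1 then (1:F) else 0) ^ m 1 * b.2.2 ^ m 2) := by
    intro b; rw [Fin.prod_univ_three]; simp [pt, mul_assoc]
  simp_rw [key]
  rw [Fintype.sum_prod_type]
  simp_rw [← Finset.mul_sum]
  rw [← Finset.sum_mul]
  simp_rw [Fintype.sum_prod_type, ← Finset.mul_sum]
  rw [← Finset.sum_mul]
  rcases lt_or_eq_of_le h2 with hc | hc
  · have : ∑ t : F, t ^ m 2 = 0 := by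
      apply FiniteField.sum_pow_lt_card_sub_one
      omega
    rw [this, mul_zero, mul_zero]
  · have hab : m 0 = 0 ∨ m 1 = 0 := by omega
    rcases hab with h | h
    · have : ∑ b : Bool, (bif b then (1:F) else 0) ^ m 0 = 0 := by
        rw [h]; simp [Fintype.sum_bool]
        exact two_zero hF
      rw [this, zero_mul]
    · have : ∑ b : Bool, (bif b then (1:F) else 0) ^ m 1 = 0 := by
        rw [h]; simp [Fintype.sum_bool]
        exact two_zero hF
      rw [this, zero_mul, mul_zero]

lemma code_sum_zero (hF : Fintype.card F = 4) (f : MvPolynomial (Fin 3) F)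
    (ht : f.totalDegree ≤ 4) (hd0 : f.degreeOf 0 < 2) (hd1 : f.degreeOf 1 < 2)
    (hd2 : f.degreeOf 2 < 4) :
    ∑ x : ↥(ACset F), eval (x : Fin 3 → F) f = 0 := by
  have hev : ∀ x : ↥(ACset F), eval (x : Fin 3 → F) f
      = ∑ m ∈ f.support, f.coeff m * ∏ i, (x : Fin 3 → F) i ^ m i :=
    fun x => eval_eq' _ f
  simp_rw [hev]
  rw [Finset.sum_comm]
  apply Finset.sum_eq_zero
  intro m hm
  rw [← Finset.mul_sum]
  have hsum : (m.sum fun _ e => e) = m 0 + m 1 + m 2 := by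
    rw [Finsupp.sum_fintype _ _ (fun _ => rfl), Fin.sum_univ_three]
  have htot' : m 0 + m 1 + m 2 ≤ 4 := by
    rw [← hsum]; exact le_trans (le_totalDegree hm) ht
  rw [sum_monomial_zero hF m (by have := monomial_le_degreeOf 0 hm; omega)
    (by have := monomial_le_degreeOf 1 hm; omega)
    (by have := monomial_le_degreeOf 2 hm; omega) htot', mul_zero]

lemma degreeOf_pow_le (i : Fin 3) (p : MvPolynomial (Fin 3) F) (n : ℕ) :
    degreeOf i (p ^ n) ≤ n * degreeOf i p := by
  induction n with
  | zero => simpa using degreeOf_C (1:F) i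
  | succ n ih =>
    rw [pow_succ]
    exact le_trans (degreeOf_mul_le i _ p) (by rw [Nat.succ_mul]; exact add_le_add ih le_rfl)

lemma degreeOf_X_pow_le (i j : Fin 3) (n : ℕ) :
    degreeOf i ((X j : MvPolynomial (Fin 3) F) ^ n) ≤ if i = j then n else 0 := by
  refine (degreeOf_pow_le i _ n).trans ?_
  rw [degreeOf_X]
  split_ifs <;> simp

noncomputable def term (a : F) (e : ℕ × ℕ × ℕ) : MvPolynomial (Fin 3) F :=
  C a * X 0 ^ e.1 * X 1 ^ e.2.1 * X 2 ^ e.2.2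

lemma term_degreeOf (a : F) (e : ℕ × ℕ × ℕ) (i : Fin 3) :
    degreeOf i (term a e) ≤
      (if i = 0 then e.1 else 0) + (if i = 1 then e.2.1 else 0) + (if i = 2 then e.2.2 else 0) := by
  have h1 := degreeOf_mul_le i (C a * X 0 ^ e.1 * X 1 ^ e.2.1) ((X 2 : MvPolynomial (Fin 3) F) ^ e.2.2)
  have h2 := degreeOf_mul_le i (C a * X 0 ^ e.1) ((X 1 : MvPolynomial (Fin 3) F) ^ e.2.1)
  have h3 := degreeOf_mul_le i (C a) ((X 0 : MvPolynomial (Fin 3) F) ^ e.1)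
  have h4 := degreeOf_X_pow_le (F := F) i 0 e.1
  have h5 := degreeOf_X_pow_le (F := F) i 1 e.2.1
  have h6 := degreeOf_X_pow_le (F := F) i 2 e.2.2
  have hC := degreeOf_C a i
  unfold term
  split_ifs at h4 h5 h6 ⊢ <;> omega

lemma term_deg0 (a : F) (e : ℕ × ℕ × ℕ) : degreeOf 0 (term a e) ≤ e.1 :=
  (term_degreeOf a e 0).trans (by simp)

lemma term_deg1 (a : F) (e : ℕ × ℕ × ℕ) : degreeOf 1 (term a e) ≤ e.2.1 :=
  (term_degreeOf a e 1).trans (by simp)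

lemma term_deg2 (a : F) (e : ℕ × ℕ × ℕ) : degreeOf 2 (term a e) ≤ e.2.2 :=
  (term_degreeOf a e 2).trans (by simp)

lemma term_total (a : F) (e : ℕ × ℕ × ℕ) : totalDegree (term a e) ≤ e.1 + e.2.1 + e.2.2 := by
  have h1 := totalDegree_mul (C a * X 0 ^ e.1 * X 1 ^ e.2.1) ((X 2 : MvPolynomial (Fin 3) F) ^ e.2.2)
  have h2 := totalDegree_mul (C a * X 0 ^ e.1) ((X 1 : MvPolynomial (Fin 3) F) ^ e.2.1)
  have h3 := totalDegree_mul (C a) ((X 0 : MvPolynomial (Fin 3) F) ^ e.1)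
  have h4 : ((X 0 : MvPolynomial (Fin 3) F) ^ e.1).totalDegree ≤ e.1 := by
    simpa using totalDegree_pow (X 0 : MvPolynomial (Fin 3) F) e.1
  have h5 : ((X 1 : MvPolynomial (Fin 3) F) ^ e.2.1).totalDegree ≤ e.2.1 := by
    simpa using totalDegree_pow (X 1 : MvPolynomial (Fin 3) F) e.2.1
  have h6 : ((X 2 : MvPolynomial (Fin 3) F) ^ e.2.2).totalDegree ≤ e.2.2 := by
    simpa using totalDegree_pow (X 2 : MvPolynomial (Fin 3) F) e.2.2
  have hC : totalDegree (C a : MvPolynomial (Fin 3) F) = 0 := totalDegree_C a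
  unfold term
  omega

noncomputable def Pd (x : Fin 3 → F) : MvPolynomial (Fin 3) F :=
  (X 0 + C (x 0) + 1) * (X 1 + C (x 1) + 1) *
    (X 2 ^ 3 + C (x 2) * X 2 ^ 2 + C (x 2) ^ 2 * X 2 + (C (x 2) ^ 3 + 1))

noncomputable def Ed (x : Fin 3 → F) : MvPolynomial (Fin 3) F :=
  term (x 0 + 1) (0,1,3) + term (x 1 + 1) (1,0,3) + term ((x 0 + 1)*(x 1 + 1)) (0,0,3)
  + term (x 2) (1,1,2) + term ((x 0 + 1)*x 2) (0,1,2) + term ((x 1 + 1)*x 2) (1,0,2)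
  + term ((x 0 + 1)*(x 1 + 1)*x 2) (0,0,2)
  + term (x 2^2) (1,1,1) + term ((x 0 + 1)*x 2^2) (0,1,1) + term ((x 1 + 1)*x 2^2) (1,0,1)
  + term ((x 0 + 1)*(x 1 + 1)*x 2^2) (0,0,1)
  + term (x 2^3 + 1) (1,1,0) + term ((x 0 + 1)*(x 2^3 + 1)) (0,1,0)
  + term ((x 1 + 1)*(x 2^3+1)) (1,0,0) + term ((x 0+1)*(x 1+1)*(x 2^3+1)) (0,0,0)

lemma Pd_eq (x : Fin 3 → F) : Pd x = X 0 * X 1 * X 2 ^ 3 + Ed x := by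
  unfold Pd Ed term
  simp only [map_add, map_mul, map_one, map_pow]
  ring

attribute [local irreducible] term

lemma Ed_deg0 (x : Fin 3 → F) : degreeOf 0 (Ed x) ≤ 1 := by
  unfold Ed
  repeat refine (degreeOf_add_le _ _ _).trans (max_le ?_ ?_)
  all_goals exact (term_deg0 _ _).trans (by norm_num)

lemma Ed_deg1 (x : Fin 3 → F) : degreeOf 1 (Ed x) ≤ 1 := by
  unfold Ed
  repeat refine (degreeOf_add_le _ _ _).trans (max_le ?_ ?_)
  all_goals exact (term_deg1 _ _).trans (by norm_num)

lemma Ed_deg2 (x : Fin 3 → F) : degreeOf 2 (Ed x) ≤ 3 := by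
  unfold Ed
  repeat refine (degreeOf_add_le _ _ _).trans (max_le ?_ ?_)
  all_goals exact (term_deg2 _ _).trans (by norm_num)

lemma Ed_total (x : Fin 3 → F) : totalDegree (Ed x) ≤ 4 := by
  unfold Ed
  repeat refine (totalDegree_add _ _).trans (max_le ?_ ?_)
  all_goals exact (term_total _ _).trans (by norm_num)

lemma mem01 {x : ↥(ACset F)} (i : Fin 3) (h : (x : Fin 3 → F) i ^ 2 = (x : Fin 3 → F) i) :
    (x : Fin 3 → F) i = 0 ∨ (x : Fin 3 → F) i = 1 := by
  rcases mul_eq_zero.mp (show (x : Fin 3 → F) i * ((x : Fin 3 → F) i - 1) = 0 by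
    linear_combination h) with h' | h'
  · exact Or.inl h'
  · exact Or.inr (sub_eq_zero.mp h')

open scoped Classical in
lemma eval_Pd (hF : Fintype.card F = 4) (x y : ↥(ACset F)) :
    eval (y : Fin 3 → F) (Pd (x : Fin 3 → F)) = if y = x then 1 else 0 := by
  have h2 := two_zero hF
  have hx01 := mem01 (x := x) 0 x.2.1
  have hy01 := mem01 (x := y) 0 y.2.1
  have hx11 := mem01 (x := x) 1 x.2.2
  have hy11 := mem01 (x := y) 1 y.2.2
  obtain ⟨a, hmema⟩ := x
  obtain ⟨b, hmemb⟩ := y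
  simp only [Subtype.mk.injEq]
  have hev : eval b (Pd a) =
      (b 0 + a 0 + 1) * ((b 1 + a 1 + 1) *
        (b 2 ^ 3 + a 2 * b 2 ^ 2 + a 2 ^ 2 * b 2 + (a 2 ^ 3 + 1))) := by
    simp only [Pd, map_mul, map_add, map_pow, map_one, eval_X, eval_C]
    ring
  rw [hev]
  by_cases hxy : b = a
  · rw [if_pos hxy, hxy]
    linear_combination (8*(a 0)*(a 1)*(a 2)^3 + 4*(a 0)*(a 2)^3 + 4*(a 1)*(a 2)^3
      + 2*(a 2)^3 + 2*(a 0)*(a 1) + (a 0) + (a 1)) * h2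
  · rw [if_neg hxy]
    by_cases h0 : b 0 = a 0
    · by_cases h1 : b 1 = a 1
      · have h2c : b 2 ≠ a 2 := by
          intro hc
          exact hxy (funext fun i => by fin_cases i <;> assumption)
        have hy4 := pow4 hF (b 2)
        have hx4 := pow4 hF (a 2)
        have key : (b 2 - a 2) * (b 2 ^ 3 + a 2 * b 2 ^ 2 + a 2 ^ 2 * b 2 + (a 2 ^ 3 + 1))
            = (b 2 - a 2) * 0 := by
          linear_combination hy4 - hx4 + (b 2 - a 2) * h2
        rw [mul_left_cancel₀ (sub_ne_zero_of_ne h2c) key, mul_zero, mul_zero]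
      · have hf : b 1 + a 1 + 1 = 0 := by
          rcases hy11 with hy | hy <;> rcases hx11 with hx | hx
          · exact absurd (hy.trans hx.symm) h1
          · rw [show b 1 = 0 from hy, show a 1 = 1 from hx]; linear_combination h2
          · rw [show b 1 = 1 from hy, show a 1 = 0 from hx]; linear_combination h2
          · exact absurd (hy.trans hx.symm) h1
        rw [hf, zero_mul, mul_zero]
    · have hf : b 0 + a 0 + 1 = 0 := by
        rcases hy01 with hy | hy <;> rcases hx01 with hx | hx
        · exact absurd (hy.trans hx.symm) h0
        · rw [show b 0 = 0 from hy, show a 0 = 1 from hx]; linear_combination h2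
        · rw [show b 0 = 1 from hy, show a 0 = 0 from hx]; linear_combination h2
        · exact absurd (hy.trans hx.symm) h0
      rw [hf, zero_mul]

open scoped Classical in
lemma exists_poly (hF : Fintype.card F = 4) (g : ↥(ACset F) → F)
    (hg : ∑ x : ↥(ACset F), g x = 0) :
    ∃ f : MvPolynomial (Fin 3) F, f.totalDegree ≤ 4 ∧ f.degreeOf 0 < 2 ∧
      f.degreeOf 1 < 2 ∧ f.degreeOf 2 < 4 ∧
      ∀ y : ↥(ACset F), g y = eval (y : Fin 3 → F) f := by
  refine ⟨∑ x : ↥(ACset F), C (g x) * Ed (x : Fin 3 → F), ?_, ?_, ?_, ?_, ?_⟩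
  · refine (totalDegree_finset_sum _ _).trans (Finset.sup_le fun x _ => ?_)
    refine (totalDegree_mul _ _).trans ?_
    have := Ed_total (F := F) (x : Fin 3 → F)
    have hC := totalDegree_C (σ := Fin 3) (g x)
    omega
  · refine Nat.lt_succ_of_le ((degreeOf_sum_le _ _ _).trans (Finset.sup_le fun x _ => ?_))
    refine (degreeOf_mul_le _ _ _).trans ?_
    have := Ed_deg0 (F := F) (x : Fin 3 → F)
    have hC := degreeOf_C (g x) (0 : Fin 3)
    omega
  · refine Nat.lt_succ_of_le ((degreeOf_sum_le _ _ _).trans (Finset.sup_le fun x _ => ?_))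
    refine (degreeOf_mul_le _ _ _).trans ?_
    have := Ed_deg1 (F := F) (x : Fin 3 → F)
    have hC := degreeOf_C (g x) (1 : Fin 3)
    omega
  · refine Nat.lt_succ_of_le ((degreeOf_sum_le _ _ _).trans (Finset.sup_le fun x _ => ?_))
    refine (degreeOf_mul_le _ _ _).trans ?_
    have := Ed_deg2 (F := F) (x : Fin 3 → F)
    have hC := degreeOf_C (g x) (2 : Fin 3)
    omega
  · intro y
    rw [map_sum]
    have hterm : ∀ x : ↥(ACset F), eval (y : Fin 3 → F) (C (g x) * Ed (x : Fin 3 → F))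
        = g x * (if y = x then 1 else 0)
          - g x * ((y : Fin 3 → F) 0 * (y : Fin 3 → F) 1 * (y : Fin 3 → F) 2 ^ 3) := by
      intro x
      have hEd : Ed (x : Fin 3 → F) = Pd (x : Fin 3 → F) - X 0 * X 1 * X 2 ^ 3 := by
        rw [Pd_eq]; ring
      rw [hEd, map_mul, map_sub, eval_C, eval_Pd hF, mul_sub]
      simp [eval_X]
    simp_rw [hterm]
    rw [Finset.sum_sub_distrib, ← Finset.sum_mul, hg, zero_mul, sub_zero]
    simp_rw [mul_ite, mul_one, mul_zero]
    rw [Finset.sum_ite_eq]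
    simp

open scoped Classical in
lemma code_iff (hF : Fintype.card F = 4) (g : ↥(ACset F) → F) :
    (∃ f : MvPolynomial (Fin 3) F, f.totalDegree ≤ 4 ∧ f.degreeOf 0 < 2 ∧
        f.degreeOf 1 < 2 ∧ f.degreeOf 2 < 4 ∧
        ∀ x : ↥(ACset F), g x = eval (x : Fin 3 → F) f)
      ↔ ∑ x : ↥(ACset F), g x = 0 := by
  constructor
  · rintro ⟨f, ht, h0, h1, h2, hev⟩
    calc ∑ x : ↥(ACset F), g x = ∑ x : ↥(ACset F), eval (x : Fin 3 → F) f :=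
          Finset.sum_congr rfl fun x _ => hev x
      _ = 0 := code_sum_zero hF f ht h0 h1 h2
  · exact exists_poly hF g

lemma part1 (g : ↥(ACset F) → F) (hcode : ∑ x : ↥(ACset F), g x = 0) (hg : g ≠ 0) :
    2 ≤ Set.ncard {x | g x ≠ 0} := by
  classical
  by_contra hlt
  push_neg at hlt
  have hfin : {x : ↥(ACset F) | g x ≠ 0}.Finite := Set.toFinite _
  obtain ⟨p, hp⟩ : ∃ p, g p ≠ 0 := Function.ne_iff.mp hg
  have hpos : 0 < {x : ↥(ACset F) | g x ≠ 0}.ncard := (Set.ncard_pos hfin).mpr ⟨p, hp⟩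
  have h1 : {x : ↥(ACset F) | g x ≠ 0}.ncard = 1 := by omega
  obtain ⟨q, hq⟩ := Set.ncard_eq_one.mp h1
  have hfil : (Finset.univ.filter fun x => g x ≠ 0) = {q} := by
    ext x
    simp only [Finset.mem_filter, Finset.mem_univ, true_and, Finset.mem_singleton]
    constructor
    · intro hx
      have : x ∈ {x : ↥(ACset F) | g x ≠ 0} := hx
      rw [hq] at this
      exact this
    · intro hx
      rw [hx]
      have : q ∈ ({q} : Set ↥(ACset F)) := rfl
      rw [← hq] at this
      exact this
  have hsum : ∑ x : ↥(ACset F), g x = g q := by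
    rw [← Finset.sum_filter_ne_zero, hfil, Finset.sum_singleton]
  have hgq : g q ≠ 0 := by
    have : q ∈ ({q} : Set ↥(ACset F)) := rfl
    rw [← hq] at this
    exact this
  exact hgq (hsum ▸ hcode)

lemma part2 (hF : Fintype.card F = 4) :
    Set.ncard {g : ↥(ACset F) → F |
      (∑ x : ↥(ACset F), g x = 0) ∧ Set.ncard {x | g x ≠ 0} = 2} = 360 := by
  classical
  have h2 := two_zero hF
  set S : Set (↥(ACset F) → F) := {g : ↥(ACset F) → F |
      (∑ x : ↥(ACset F), g x = 0) ∧ Set.ncard {x | g x ≠ 0} = 2} with hS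
  have hmem : ∀ (s : Finset ↥(ACset F)), s.card = 2 → ∀ (c : F), c ≠ 0 →
      (fun x => if x ∈ s then c else 0) ∈ S := by
    intro s hs c hc
    constructor
    · have : ∑ x : ↥(ACset F), (if x ∈ s then c else 0) = ∑ _x ∈ s, c := by
        rw [Finset.sum_ite_mem, Finset.univ_inter]
      rw [this, Finset.sum_const, hs]
      rw [show (2 : ℕ) • c = 2 * c by rw [two_smul, two_mul], h2, zero_mul]
    · have hsupp : {x : ↥(ACset F) | (if x ∈ s then c else 0) ≠ 0} = ↑s := by
        ext x
        by_cases hx : x ∈ s <;> simp [hx, hc]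
      rw [hsupp, Set.ncard_coe_finset, hs]
  let Φ : {s : Finset ↥(ACset F) // s.card = 2} × {c : F // c ≠ 0} → ↥S :=
    fun p => ⟨fun x => if x ∈ p.1.1 then p.2.1 else 0, hmem p.1.1 p.1.2 p.2.1 p.2.2⟩
  have hbij : Function.Bijective Φ := by
    constructor
    · rintro ⟨⟨s, hs⟩, ⟨c, hc⟩⟩ ⟨⟨s', hs'⟩, ⟨c', hc'⟩⟩ h
      have hfun := congrArg Subtype.val h
      simp only [Φ] at hfun
      have hss : s = s' := by
        ext a
        have := congrFun hfun a
        by_cases h1 : a ∈ s <;> by_cases h2' : a ∈ s' <;> simp [h1, h2'] at this ⊢ <;> tauto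
      subst hss
      obtain ⟨a, ha⟩ := Finset.card_pos.mp (by omega : 0 < s.card)
      have := congrFun hfun a
      simp [ha] at this
      simp [this]
    · rintro ⟨g, hsum, hsupp⟩
      obtain ⟨p, q, hpq, hset⟩ := Set.ncard_eq_two.mp hsupp
      have hgp : g p ≠ 0 := by
        have : p ∈ {x : ↥(ACset F) | g x ≠ 0} := by rw [hset]; exact Set.mem_insert _ _
        exact this
      have hgq : g q ≠ 0 := by
        have : q ∈ {x : ↥(ACset F) | g x ≠ 0} := by
          rw [hset]; exact Set.mem_insert_of_mem _ rfl
        exact this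
      have hfil : (Finset.univ.filter fun x => g x ≠ 0) = {p, q} := by
        ext x
        simp only [Finset.mem_filter, Finset.mem_univ, true_and, Finset.mem_insert,
          Finset.mem_singleton]
        have := Set.ext_iff.mp hset x
        simpa using this
      have hsum2 : g p + g q = 0 := by
        rw [← Finset.sum_filter_ne_zero, hfil, Finset.sum_pair hpq] at hsum
        exact hsum
      have hgqp : g q = g p := by linear_combination hsum2 - g p * h2
      refine ⟨⟨⟨{p, q}, Finset.card_pair hpq⟩, ⟨g p, hgp⟩⟩, ?_⟩
      apply Subtype.ext
      funext x
      simp only [Φ]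
      by_cases hx : x ∈ ({p, q} : Finset ↥(ACset F))
      · rw [if_pos hx]
        rcases Finset.mem_insert.mp hx with h | h
        · rw [h]
        · rw [Finset.mem_singleton.mp h, hgqp]
      · rw [if_neg hx]
        by_contra hne
        have : x ∈ {x : ↥(ACset F) | g x ≠ 0} := fun hzz => hne hzz.symm
        rw [hset] at this
        rcases this with h | h
        · exact hx (by simp [h])
        · exact hx (by simp [Set.mem_singleton_iff.mp h])
  have hcard : Nat.card ({s : Finset ↥(ACset F) // s.card = 2} × {c : F // c ≠ 0})
      = Nat.card ↥S := Nat.card_eq_of_bijective Φ hbij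
  rw [← Nat.card_coe_set_eq, ← hcard, Nat.card_prod]
  have hV : Fintype.card ↥(ACset F) = 16 := by
    rw [← Nat.card_eq_fintype_card]; exact card_A hF
  rw [Nat.card_eq_fintype_card, Nat.card_eq_fintype_card, Fintype.card_finset_len, hV]
  have hc3 : Fintype.card {c : F // c ≠ 0} = 3 := by
    rw [Fintype.card_subtype_compl, Fintype.card_subtype_eq, hF]
  rw [hc3]
  decide

end AC4proof

/-- For `A = F_2 × F_2 × F_4 ⊆ F_4^3` (with `F_2` the prime subfield, i.e. the fixed points
of `x ↦ x^2`), the affine Cartesian code `AC_4(4, A)` has minimum distance `2` and exactly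
`360` minimum weight codewords. -/
theorem AC4_example (F : Type*) [Field F] [Fintype F] (hF : Fintype.card F = 4) :
    (∀ g : ↥{x : Fin 3 → F | x 0 ^ 2 = x 0 ∧ x 1 ^ 2 = x 1} → F,
      (∃ f : MvPolynomial (Fin 3) F, f.totalDegree ≤ 4 ∧ f.degreeOf 0 < 2 ∧
          f.degreeOf 1 < 2 ∧ f.degreeOf 2 < 4 ∧
          ∀ x : ↥{x : Fin 3 → F | x 0 ^ 2 = x 0 ∧ x 1 ^ 2 = x 1},
            g x = MvPolynomial.eval (x : Fin 3 → F) f) →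
      g ≠ 0 → 2 ≤ Set.ncard {x | g x ≠ 0}) ∧
    Set.ncard {g : ↥{x : Fin 3 → F | x 0 ^ 2 = x 0 ∧ x 1 ^ 2 = x 1} → F |
      (∃ f : MvPolynomial (Fin 3) F, f.totalDegree ≤ 4 ∧ f.degreeOf 0 < 2 ∧
          f.degreeOf 1 < 2 ∧ f.degreeOf 2 < 4 ∧
          ∀ x : ↥{x : Fin 3 → F | x 0 ^ 2 = x 0 ∧ x 1 ^ 2 = x 1},
            g x = MvPolynomial.eval (x : Fin 3 → F) f) ∧
      Set.ncard {x | g x ≠ 0} = 2} = 360 := by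
  constructor
  · intro g hcode hg
    exact AC4proof.part1 g ((AC4proof.code_iff hF g).mp hcode) hg
  · have hset : {g : ↥{x : Fin 3 → F | x 0 ^ 2 = x 0 ∧ x 1 ^ 2 = x 1} → F |
        (∃ f : MvPolynomial (Fin 3) F, f.totalDegree ≤ 4 ∧ f.degreeOf 0 < 2 ∧
          f.degreeOf 1 < 2 ∧ f.degreeOf 2 < 4 ∧
          ∀ x : ↥{x : Fin 3 → F | x 0 ^ 2 = x 0 ∧ x 1 ^ 2 = x 1},
            g x = MvPolynomial.eval (x : Fin 3 → F) f) ∧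
        Set.ncard {x | g x ≠ 0} = 2}
        = {g : ↥(AC4proof.ACset F) → F |
            (∑ x : ↥(AC4proof.ACset F), g x = 0) ∧ Set.ncard {x | g x ≠ 0} = 2} := by
      ext g
      simp only [Set.mem_setOf_eq]
      exact and_congr_left' (AC4proof.code_iff hF g)
    rw [hset]
    exact AC4proof.part2 hF
end

section
/- Let A = F_3 × F_9 ⊆ F_9^2. Then the affine Cartesian code AC_9(9, A) has minimum distance 2 and exactly 2808 minimum weight codewords. -/
set_option linter.unusedSectionVars false

namespace AC9aux

variable {F : Type*} [Field F] [Fintype F]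

lemma char3 (hF : Fintype.card F = 9) : CharP F 3 := by
  haveI : CharP F (ringChar F) := ringChar.charP F
  obtain ⟨n, hp, hc⟩ := FiniteField.card F (ringChar F)
  have hdvd : ringChar F ∣ 9 := by
    rw [← hF, hc]; exact dvd_pow_self _ (by positivity)
  have h3 : ringChar F = 3 := by
    have h33 : ringChar F ∣ 3 * 3 := by norm_num; exact hdvd
    rcases (Nat.Prime.dvd_mul hp).1 h33 with h | h <;>
      exact (Nat.prime_dvd_prime_iff_eq hp Nat.prime_three).1 h
  exact h3 ▸ ‹CharP F (ringChar F)›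

lemma three_eq_zero (hF : Fintype.card F = 9) : (3 : F) = 0 := by
  haveI := char3 hF
  exact CharP.cast_eq_zero F 3

lemma one_ne_neg_one (hF : Fintype.card F = 9) : (1 : F) ≠ -1 := by
  intro h
  have h2 : (2 : F) = 0 := by linear_combination h
  have h3 := three_eq_zero hF
  have : (1 : F) = 0 := by linear_combination h3 - h2
  exact one_ne_zero this

lemma cube_eq_self_iff (s : F) : s ^ 3 = s ↔ s = 0 ∨ s = 1 ∨ s = -1 := by
  constructor
  · intro h
    have : s * ((s - 1) * (s + 1)) = 0 := by linear_combination h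
    rcases mul_eq_zero.1 this with h0 | h1
    · exact Or.inl h0
    · rcases mul_eq_zero.1 h1 with h1 | h2
      · exact Or.inr (Or.inl (by linear_combination h1))
      · exact Or.inr (Or.inr (by linear_combination h2))
  · rintro (rfl | rfl | rfl) <;> ring

lemma sq_eq_one {s : F} (h : s ^ 3 = s) (h0 : s ≠ 0) : s ^ 2 = 1 := by
  have : s * s ^ 2 = s * 1 := by linear_combination h
  exact mul_left_cancel₀ h0 this

lemma pow8_eq_one (hF : Fintype.card F = 9) {t : F} (h0 : t ≠ 0) : t ^ 8 = 1 := by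
  have h9 : t ^ 9 = t := by rw [← hF]; exact FiniteField.pow_card t
  have : t * t ^ 8 = t * 1 := by linear_combination h9
  exact mul_left_cancel₀ h0 this

lemma sub_cube (hF : Fintype.card F = 9) (a b : F) : (a - b) ^ 3 = a ^ 3 - b ^ 3 := by
  haveI := char3 hF
  haveI : Fact (Nat.Prime 3) := ⟨by norm_num⟩
  exact sub_pow_char a b


open MvPolynomial

abbrev A (F : Type*) [Field F] : Set (Fin 2 → F) := {x : Fin 2 → F | x 0 ^ 3 = x 0}

noncomputable instance : Fintype ↥(A F) := Fintype.ofFinite _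
noncomputable instance : Fintype {s : F // s ^ 3 = s} := Fintype.ofFinite _

noncomputable def e : {s : F // s ^ 3 = s} × F ≃ ↥(A F) where
  toFun := fun p => ⟨![p.1.1, p.2], by simpa using p.1.2⟩
  invFun := fun x => (⟨x.1 0, x.2⟩, x.1 1)
  left_inv := fun p => by simp
  right_inv := fun x => by
    apply Subtype.ext
    funext i
    fin_cases i <;> simp

lemma e_fst (p : {s : F // s ^ 3 = s} × F) : (e p).1 0 = p.1.1 := rfl
lemma e_snd (p : {s : F // s ^ 3 = s} × F) : (e p).1 1 = p.2 := rfl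

lemma S3_finset (hF : Fintype.card F = 9) :
    ∀ a : ℕ, a ≤ 1 → ∑ s : {s : F // s ^ 3 = s}, (s : F) ^ a = 0 := by
  classical
  intro a ha
  have hmem : ∀ x : F, x ∈ ({0, 1, -1} : Finset F) ↔ x ^ 3 = x := by
    intro x
    simp [cube_eq_self_iff]
  rw [← Finset.sum_subtype _ hmem (fun x => x ^ a)]
  have h01 : (0 : F) ∉ ({1, -1} : Finset F) := by
    simp only [Finset.mem_insert, Finset.mem_singleton]
    push_neg
    constructor
    · exact fun h => one_ne_zero h.symm
    · intro h; exact one_ne_zero (by linear_combination h)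
  have h1m : (1 : F) ∉ ({-1} : Finset F) := by
    simpa using one_ne_neg_one hF
  rw [show ({0, 1, -1} : Finset F) = insert 0 (insert 1 {-1}) from rfl,
    Finset.sum_insert h01, Finset.sum_insert h1m, Finset.sum_singleton]
  interval_cases a
  · have h3 := three_eq_zero hF
    simp only [pow_zero]
    linear_combination h3
  · simp

lemma sumF_pow (hF : Fintype.card F = 9) {b : ℕ} (hb : b ≤ 7) : ∑ t : F, t ^ b = 0 :=
  FiniteField.sum_pow_lt_card_sub_one F b (by omega)

lemma monomial_sum_zero (hF : Fintype.card F = 9) {a b : ℕ} (ha : a ≤ 2) (hb : b ≤ 8)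
    (hab : a + b ≤ 9) : ∑ x : ↥(A F), x.1 0 ^ a * x.1 1 ^ b = 0 := by
  rw [← Equiv.sum_comp (e (F := F)) (fun x => x.1 0 ^ a * x.1 1 ^ b)]
  simp only [e_fst, e_snd]
  rw [Fintype.sum_prod_type]
  simp only [← Finset.sum_mul, ← Finset.mul_sum]
  rcases Nat.lt_or_ge b 8 with hb7 | hb8
  · rw [sumF_pow hF (by omega)]; ring
  · have hb8' : b = 8 := by omega
    have ha1 : a ≤ 1 := by omega
    rw [S3_finset hF a ha1]; ring

lemma sum_eval_zero (hF : Fintype.card F = 9) (f : MvPolynomial (Fin 2) F)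
    (h9 : f.totalDegree ≤ 9) (h0 : f.degreeOf 0 < 3) (h1 : f.degreeOf 1 < 9) :
    ∑ x : ↥(A F), MvPolynomial.eval (x : Fin 2 → F) f = 0 := by
  classical
  simp only [MvPolynomial.eval_eq']
  rw [Finset.sum_comm]
  refine Finset.sum_eq_zero fun m hm => ?_
  rw [← Finset.mul_sum]
  have hm0 : m 0 < 3 := (MvPolynomial.degreeOf_lt_iff (by norm_num)).1 h0 m hm
  have hm1 : m 1 < 9 := (MvPolynomial.degreeOf_lt_iff (by norm_num)).1 h1 m hm
  have hsum : m 0 + m 1 ≤ 9 := by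
    have := MvPolynomial.le_totalDegree hm
    have hms : (m.sum fun _ e => e) = m 0 + m 1 := by
      rw [Finsupp.sum_fintype _ _ (fun _ => rfl), Fin.sum_univ_two]
    omega
  have : ∀ x : ↥(A F), (∏ i : Fin 2, x.1 i ^ m i) = x.1 0 ^ m 0 * x.1 1 ^ m 1 := by
    intro x; rw [Fin.prod_univ_two]
  rw [Finset.sum_congr rfl (fun x _ => this x),
    monomial_sum_zero hF (by omega) (by omega) hsum, mul_zero]


-- degree helpers
lemma degreeOf_neg_eq (n : Fin 2) (f : MvPolynomial (Fin 2) F) :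
    MvPolynomial.degreeOf n (-f) = MvPolynomial.degreeOf n f := by
  simp [MvPolynomial.degreeOf, MvPolynomial.degrees_neg]

lemma degreeOf_sub_le (n : Fin 2) (f g : MvPolynomial (Fin 2) F) :
    MvPolynomial.degreeOf n (f - g) ≤ max (MvPolynomial.degreeOf n f) (MvPolynomial.degreeOf n g) := by
  rw [sub_eq_add_neg]
  refine le_trans (MvPolynomial.degreeOf_add_le n f (-g)) ?_
  rw [degreeOf_neg_eq]

lemma degreeOf_one_eq (n : Fin 2) : MvPolynomial.degreeOf n (1 : MvPolynomial (Fin 2) F) = 0 := by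
  rw [← MvPolynomial.C_1, MvPolynomial.degreeOf_C]

lemma degreeOf_pow_le (n : Fin 2) (f : MvPolynomial (Fin 2) F) (k : ℕ) :
    MvPolynomial.degreeOf n (f ^ k) ≤ k * MvPolynomial.degreeOf n f := by
  induction k with
  | zero => simp [degreeOf_one_eq]
  | succ k ih =>
      rw [pow_succ]
      refine le_trans (MvPolynomial.degreeOf_mul_le n _ _) ?_
      have : (k + 1) * MvPolynomial.degreeOf n f = k * MvPolynomial.degreeOf n f + MvPolynomial.degreeOf n f := by ring
      omega

lemma totalDegree_sub_le (f g : MvPolynomial (Fin 2) F) :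
    (f - g).totalDegree ≤ max f.totalDegree g.totalDegree := by
  rw [sub_eq_add_neg]
  refine le_trans (MvPolynomial.totalDegree_add f (-g)) ?_
  rw [MvPolynomial.totalDegree_neg]

lemma totalDegree_XC (i : Fin 2) (a : F) : (X i - C a : MvPolynomial (Fin 2) F).totalDegree ≤ 1 := by
  refine le_trans (totalDegree_sub_le _ _) ?_
  simp [MvPolynomial.totalDegree_X, MvPolynomial.totalDegree_C]

lemma degreeOf_XC (i j : Fin 2) (a : F) :
    MvPolynomial.degreeOf i (X j - C a : MvPolynomial (Fin 2) F) ≤ if i = j then 1 else 0 := by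
  refine le_trans (degreeOf_sub_le _ _ _) ?_
  rw [MvPolynomial.degreeOf_X, MvPolynomial.degreeOf_C]
  simp

noncomputable def P (a : F) : MvPolynomial (Fin 2) F := 1 - (X 0 - C a) ^ 2
noncomputable def Q (b : F) : MvPolynomial (Fin 2) F := 1 - (X 1 - C b) ^ 8
noncomputable def L (x : ↥(A F)) : MvPolynomial (Fin 2) F := P (x.1 0) * Q (x.1 1)

lemma totalDegree_one_le : (1 : MvPolynomial (Fin 2) F).totalDegree ≤ 0 := by
  rw [← MvPolynomial.C_1]; simp [MvPolynomial.totalDegree_C]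

lemma tP (a : F) : (P a).totalDegree ≤ 2 := by
  refine le_trans (totalDegree_sub_le _ _) ?_
  refine max_le (le_trans totalDegree_one_le (by norm_num)) ?_
  refine le_trans (MvPolynomial.totalDegree_pow _ _) ?_
  have := totalDegree_XC (F := F) 0 a
  omega

lemma tQ (b : F) : (Q b).totalDegree ≤ 8 := by
  refine le_trans (totalDegree_sub_le _ _) ?_
  refine max_le (le_trans totalDegree_one_le (by norm_num)) ?_
  refine le_trans (MvPolynomial.totalDegree_pow _ _) ?_
  have := totalDegree_XC (F := F) 1 b
  omega

lemma d0P (a : F) : MvPolynomial.degreeOf 0 (P a) ≤ 2 := by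
  refine le_trans (degreeOf_sub_le _ _ _) ?_
  refine max_le (by simp [degreeOf_one_eq]) ?_
  refine le_trans (degreeOf_pow_le _ _ _) ?_
  have := degreeOf_XC (F := F) 0 0 a
  simp at this
  omega

lemma d1P (a : F) : MvPolynomial.degreeOf 1 (P a) ≤ 0 := by
  refine le_trans (degreeOf_sub_le _ _ _) ?_
  refine max_le (by simp [degreeOf_one_eq]) ?_
  refine le_trans (degreeOf_pow_le _ _ _) ?_
  have := degreeOf_XC (F := F) 1 0 a
  simp at this
  omega

lemma d0Q (b : F) : MvPolynomial.degreeOf 0 (Q b) ≤ 0 := by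
  refine le_trans (degreeOf_sub_le _ _ _) ?_
  refine max_le (by simp [degreeOf_one_eq]) ?_
  refine le_trans (degreeOf_pow_le _ _ _) ?_
  have := degreeOf_XC (F := F) 0 1 b
  simp at this
  omega

lemma d1Q (b : F) : MvPolynomial.degreeOf 1 (Q b) ≤ 8 := by
  refine le_trans (degreeOf_sub_le _ _ _) ?_
  refine max_le (by simp [degreeOf_one_eq]) ?_
  refine le_trans (degreeOf_pow_le _ _ _) ?_
  have := degreeOf_XC (F := F) 1 1 b
  simp at this
  omega


open scoped Classical

lemma tQQ (b d : F) : (Q b - Q d).totalDegree ≤ 7 := by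
  have hQQ : Q b - Q d = (X 1 - C d : MvPolynomial (Fin 2) F) ^ 8 - (X 1 - C b) ^ 8 := by
    simp only [Q]; ring
  have key : (X 1 - C d : MvPolynomial (Fin 2) F) = (X 1 - C b) + C (b - d) := by
    rw [map_sub]; ring
  have hadd := add_pow (X 1 - C b : MvPolynomial (Fin 2) F) (C (b - d)) 8
  rw [Finset.sum_range_succ] at hadd
  simp only [Nat.sub_self, pow_zero, mul_one, Nat.choose_self, Nat.cast_one] at hadd
  have hdiff : Q b - Q d = ∑ k ∈ Finset.range 8,
      (X 1 - C b : MvPolynomial (Fin 2) F) ^ k * C (b - d) ^ (8 - k) * ((Nat.choose 8 k : ℕ) : MvPolynomial (Fin 2) F) := by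
    rw [hQQ, key, hadd, add_sub_cancel_right]
  rw [hdiff]
  refine le_trans (MvPolynomial.totalDegree_finset_sum _ _) ?_
  refine Finset.sup_le fun k hk => ?_
  have hk7 : k ≤ 7 := by simp at hk; omega
  refine le_trans (MvPolynomial.totalDegree_mul _ _) ?_
  have h1 : ((X 1 - C b : MvPolynomial (Fin 2) F) ^ k * C (b - d) ^ (8 - k)).totalDegree ≤ k := by
    refine le_trans (MvPolynomial.totalDegree_mul _ _) ?_
    have ha : ((X 1 - C b : MvPolynomial (Fin 2) F) ^ k).totalDegree ≤ k := by
      refine le_trans (MvPolynomial.totalDegree_pow _ _) ?_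
      have := totalDegree_XC (F := F) 1 b
      calc k * (X 1 - C b : MvPolynomial (Fin 2) F).totalDegree ≤ k * 1 := by
            exact Nat.mul_le_mul_left k this
        _ = k := by omega
    have hb : ((C (b - d) : MvPolynomial (Fin 2) F) ^ (8 - k)).totalDegree ≤ 0 := by
      refine le_trans (MvPolynomial.totalDegree_pow _ _) ?_
      rw [MvPolynomial.totalDegree_C]; omega
    omega
  have h2 : ((Nat.choose 8 k : ℕ) : MvPolynomial (Fin 2) F).totalDegree = 0 := by
    rw [← map_natCast (MvPolynomial.C : F →+* MvPolynomial (Fin 2) F)]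
    exact MvPolynomial.totalDegree_C _
  omega

lemma tPP (a c : F) : (P a - P c).totalDegree ≤ 1 := by
  have hid : P a - P c = C (a - c) * (X 0 + X 0 - C (a + c)) := by
    simp only [P, map_sub, map_add]; ring
  rw [hid]
  refine le_trans (MvPolynomial.totalDegree_mul _ _) ?_
  rw [MvPolynomial.totalDegree_C]
  have : (X 0 + X 0 - C (a + c) : MvPolynomial (Fin 2) F).totalDegree ≤ 1 := by
    refine le_trans (totalDegree_sub_le _ _) ?_
    refine max_le (le_trans (MvPolynomial.totalDegree_add _ _) ?_) ?_
    · simp [MvPolynomial.totalDegree_X]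
    · exact le_trans (le_of_eq (MvPolynomial.totalDegree_C _)) (by omega)
  omega

lemma tD (x y : ↥(A F)) : (L x - L y).totalDegree ≤ 9 := by
  have decomp : L x - L y =
      P (x.1 0) * (Q (x.1 1) - Q (y.1 1)) + (P (x.1 0) - P (y.1 0)) * Q (y.1 1) := by
    simp only [L]; ring
  rw [decomp]
  refine le_trans (MvPolynomial.totalDegree_add _ _) ?_
  refine max_le ?_ ?_
  · refine le_trans (MvPolynomial.totalDegree_mul _ _) ?_
    have := tP (x.1 0); have := tQQ (x.1 1) (y.1 1); omega
  · refine le_trans (MvPolynomial.totalDegree_mul _ _) ?_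
    have := tPP (x.1 0) (y.1 0); have := tQ (y.1 1); omega

lemma d0L (x : ↥(A F)) : MvPolynomial.degreeOf 0 (L x) ≤ 2 := by
  refine le_trans (MvPolynomial.degreeOf_mul_le _ _ _) ?_
  have := d0P (x.1 0); have := d0Q (x.1 1); omega

lemma d1L (x : ↥(A F)) : MvPolynomial.degreeOf 1 (L x) ≤ 8 := by
  refine le_trans (MvPolynomial.degreeOf_mul_le _ _ _) ?_
  have := d1P (x.1 0); have := d1Q (x.1 1); omega

lemma eval_P (hF : Fintype.card F = 9) {z : Fin 2 → F} (hz : z 0 ^ 3 = z 0) {a : F}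
    (ha : a ^ 3 = a) : MvPolynomial.eval z (P a) = if z 0 = a then 1 else 0 := by
  simp only [P, map_sub, map_one, map_pow, MvPolynomial.eval_X, MvPolynomial.eval_C]
  split_ifs with h
  · rw [h]; ring
  · have hc : z 0 - a ≠ 0 := sub_ne_zero.2 h
    have hc3 : (z 0 - a) ^ 3 = z 0 - a := by rw [sub_cube hF, hz, ha]
    have := sq_eq_one hc3 hc
    rw [this]; ring

lemma eval_Q (hF : Fintype.card F = 9) (z : Fin 2 → F) (b : F) :
    MvPolynomial.eval z (Q b) = if z 1 = b then 1 else 0 := by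
  simp only [Q, map_sub, map_one, map_pow, MvPolynomial.eval_X, MvPolynomial.eval_C]
  split_ifs with h
  · rw [h]; ring
  · have hc : z 1 - b ≠ 0 := sub_ne_zero.2 h
    rw [pow8_eq_one hF hc]; ring

lemma eval_L (hF : Fintype.card F = 9) (x z : ↥(A F)) :
    MvPolynomial.eval (z : Fin 2 → F) (L x) = if z = x then 1 else 0 := by
  rw [L, map_mul, eval_P hF z.2 x.2, eval_Q hF]
  have hzx : z = x ↔ z.1 0 = x.1 0 ∧ z.1 1 = x.1 1 := by
    rw [Subtype.ext_iff, _root_.funext_iff, Fin.forall_fin_two]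
  split_ifs with h1 h2 h3 <;> simp_all

noncomputable def interp (v : F) (x y : ↥(A F)) : MvPolynomial (Fin 2) F :=
  C v * (L x - L y)

lemma interp_spec (hF : Fintype.card F = 9) (x y : ↥(A F)) (hxy : x ≠ y) (v : F) :
    (interp v x y).totalDegree ≤ 9 ∧ (interp v x y).degreeOf 0 < 3 ∧
      (interp v x y).degreeOf 1 < 9 ∧
      ∀ z : ↥(A F), MvPolynomial.eval (z : Fin 2 → F) (interp v x y) =
        if z = x then v else if z = y then -v else 0 := by
  refine ⟨?_, ?_, ?_, ?_⟩
  · refine le_trans (MvPolynomial.totalDegree_mul _ _) ?_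
    rw [MvPolynomial.totalDegree_C]
    have := tD x y; omega
  · refine lt_of_le_of_lt (MvPolynomial.degreeOf_mul_le _ _ _) ?_
    rw [MvPolynomial.degreeOf_C]
    have h := degreeOf_sub_le (F := F) 0 (L x) (L y)
    have := d0L x; have := d0L y; omega
  · refine lt_of_le_of_lt (MvPolynomial.degreeOf_mul_le _ _ _) ?_
    rw [MvPolynomial.degreeOf_C]
    have h := degreeOf_sub_le (F := F) 1 (L x) (L y)
    have := d1L x; have := d1L y; omega
  · intro z
    rw [interp, map_mul, MvPolynomial.eval_C, map_sub, eval_L hF, eval_L hF]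
    split_ifs with h1 h2 h2
    · exact absurd (h1 ▸ h2.symm ▸ rfl : x = y) hxy
    · ring
    · ring
    · ring


lemma cardS3 (hF : Fintype.card F = 9) : Fintype.card {s : F // s ^ 3 = s} = 3 := by
  rw [← Nat.card_eq_fintype_card]
  have hs : {s : F | s ^ 3 = s} = {0, 1, -1} := by
    ext s; simpa using cube_eq_self_iff s
  have h0m : (0 : F) ∉ ({1, -1} : Set F) := by
    simp only [Set.mem_insert_iff, Set.mem_singleton_iff]
    push_neg
    exact ⟨fun h => one_ne_zero h.symm, fun h => one_ne_zero (by linear_combination h)⟩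
  have h1m : (1 : F) ≠ -1 := one_ne_neg_one hF
  calc Nat.card {s : F // s ^ 3 = s} = Set.ncard {s : F | s ^ 3 = s} :=
        Nat.card_coe_set_eq _
    _ = ({0, 1, -1} : Set F).ncard := by rw [hs]
    _ = 3 := by
        rw [Set.ncard_insert_of_notMem h0m (Set.toFinite _), Set.ncard_pair h1m]

lemma cardA (hF : Fintype.card F = 9) : Fintype.card ↥(A F) = 27 := by
  rw [← Fintype.card_congr (e (F := F)), Fintype.card_prod, cardS3 hF, hF]

lemma card_units (hF : Fintype.card F = 9) : Fintype.card {v : F // v ≠ 0} = 8 := by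
  have h1 : Fintype.card {v : F // v = 0} = 1 := Fintype.card_subtype_eq 0
  have := Fintype.card_subtype_compl (fun v : F => v = 0)
  rw [h1, hF] at this
  exact this

set_option maxRecDepth 10000 in
lemma card_pairs : Fintype.card {q : Fin 27 × Fin 27 // q.1 < q.2} = 351 := by decide

noncomputable def Phi (ε : ↥(A F) ≃ Fin 27)
    (q : {q : Fin 27 × Fin 27 // q.1 < q.2} × {v : F // v ≠ 0}) : ↥(A F) → F :=
  fun z => if z = ε.symm q.1.1.1 then q.2.1 else if z = ε.symm q.1.1.2 then -q.2.1 else 0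

lemma Phi_ne (ε : ↥(A F) ≃ Fin 27) (q : {q : Fin 27 × Fin 27 // q.1 < q.2} × {v : F // v ≠ 0}) :
    ε.symm q.1.1.1 ≠ ε.symm q.1.1.2 := by
  intro h
  have := ε.symm.injective h
  exact absurd (this ▸ q.1.2) (lt_irrefl _)

lemma Phi_supp (ε : ↥(A F) ≃ Fin 27)
    (q : {q : Fin 27 × Fin 27 // q.1 < q.2} × {v : F // v ≠ 0}) :
    {z | Phi ε q z ≠ 0} = {ε.symm q.1.1.1, ε.symm q.1.1.2} := by
  ext z
  simp only [Set.mem_setOf_eq, Phi, Set.mem_insert_iff, Set.mem_singleton_iff]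
  split_ifs with h1 h2
  · simpa [h1] using q.2.2
  · simp only [h2, neg_ne_zero]
    exact iff_of_true q.2.2 (Or.inr trivial)
  · exact iff_of_false (by simp) (by push_neg; exact ⟨h1, h2⟩)

lemma Phi_inj (ε : ↥(A F) ≃ Fin 27) : Function.Injective (Phi ε) := by
  rintro ⟨⟨⟨i, j⟩, hij⟩, ⟨v, hv⟩⟩ ⟨⟨⟨i', j'⟩, hij'⟩, ⟨v', hv'⟩⟩ h
  have hsupp := (Phi_supp ε (⟨⟨(i, j), hij⟩, ⟨v, hv⟩⟩)).symm.trans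
    ((congrArg (fun g => {z | g z ≠ 0}) h).trans (Phi_supp ε (⟨⟨(i', j'), hij'⟩, ⟨v', hv'⟩⟩)))
  rcases Set.pair_eq_pair_iff.1 hsupp with ⟨ha, hb⟩ | ⟨ha, hb⟩
  · have hi : i = i' := by simpa using congrArg ε (ha : ε.symm i = ε.symm i')
    have hj : j = j' := by simpa using congrArg ε hb
    have hvv : v = v' := by
      have := congrFun h (ε.symm i)
      simp only [Phi, if_pos rfl] at this
      rw [hi] at this
      simp only [if_pos rfl] at this
      exact this
    subst hi; subst hj; subst hvv; rfl
  · exfalso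
    have hi : i = j' := by simpa using congrArg ε (ha : ε.symm i = ε.symm j')
    have hj : j = i' := by simpa using congrArg ε hb
    have h1 : ((i : Fin 27) : ℕ) < (j : ℕ) := hij
    have h2 : ((i' : Fin 27) : ℕ) < (j' : ℕ) := hij'
    have h3 : ((i : Fin 27) : ℕ) = (j' : ℕ) := congrArg Fin.val hi
    have h4 : ((j : Fin 27) : ℕ) = (i' : ℕ) := congrArg Fin.val hj
    omega

lemma range_Phi (hF : Fintype.card F = 9) (ε : ↥(A F) ≃ Fin 27) :
    Set.range (Phi ε) = {g : ↥(A F) → F |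
      (∃ f : MvPolynomial (Fin 2) F, f.totalDegree ≤ 9 ∧ f.degreeOf 0 < 3 ∧
          f.degreeOf 1 < 9 ∧ ∀ x : ↥(A F), g x = MvPolynomial.eval (x : Fin 2 → F) f) ∧
      Set.ncard {x | g x ≠ 0} = 2} := by
  ext g
  constructor
  · rintro ⟨q, rfl⟩
    have hxy := Phi_ne ε q
    obtain ⟨h9, h0, h1, heval⟩ := interp_spec hF (ε.symm q.1.1.1) (ε.symm q.1.1.2) hxy q.2.1
    constructor
    · exact ⟨interp q.2.1 (ε.symm q.1.1.1) (ε.symm q.1.1.2), h9, h0, h1,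
        fun z => by rw [heval z]; rfl⟩
    · rw [Phi_supp]
      exact Set.ncard_pair hxy
  · rintro ⟨⟨f, h9, h0, h1, hfg⟩, h2⟩
    have hsum : ∑ z : ↥(A F), g z = 0 := by
      rw [Finset.sum_congr rfl (fun z _ => hfg z)]
      exact sum_eval_zero hF f h9 h0 h1
    obtain ⟨x, y, hxy, hset⟩ := Set.ncard_eq_two.1 h2
    have hgx : g x ≠ 0 := by
      have : x ∈ {z | g z ≠ 0} := by rw [hset]; exact Set.mem_insert _ _
      exact this
    have hgy : g y ≠ 0 := by
      have : y ∈ {z | g z ≠ 0} := by rw [hset]; exact Set.mem_insert_iff.2 (Or.inr rfl)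
      exact this
    have hz0 : ∀ z : ↥(A F), z ≠ x → z ≠ y → g z = 0 := by
      intro z h1' h2'
      by_contra hz
      have : z ∈ {z | g z ≠ 0} := hz
      rw [hset] at this
      rcases this with h | h
      exacts [h1' h, h2' h]
    have hpair : g x + g y = 0 := by
      have hsub : ∑ z ∈ ({x, y} : Finset ↥(A F)), g z = ∑ z : ↥(A F), g z := by
        refine Finset.sum_subset (Finset.subset_univ _) ?_
        intro z _ hz
        simp only [Finset.mem_insert, Finset.mem_singleton] at hz
        push_neg at hz
        exact hz0 z hz.1 hz.2
      rw [Finset.sum_pair hxy] at hsub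
      rw [hsub, hsum]
    have hεxy : ε x ≠ ε y := fun h => hxy (ε.injective h)
    rcases lt_or_gt_of_ne hεxy with hlt | hlt
    · refine ⟨⟨⟨(ε x, ε y), hlt⟩, ⟨g x, hgx⟩⟩, ?_⟩
      funext z
      simp only [Phi, Equiv.symm_apply_apply]
      split_ifs with hzx hzy
      · rw [hzx]
      · rw [hzy]; linear_combination -hpair
      · exact (hz0 z hzx hzy).symm
    · refine ⟨⟨⟨(ε y, ε x), hlt⟩, ⟨g y, hgy⟩⟩, ?_⟩
      funext z
      simp only [Phi, Equiv.symm_apply_apply]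
      split_ifs with hzy hzx
      · rw [hzy]
      · rw [hzx]; linear_combination -hpair
      · exact (hz0 z hzx hzy).symm


lemma part1 (hF : Fintype.card F = 9) (g : ↥(A F) → F)
    (hcode : ∃ f : MvPolynomial (Fin 2) F, f.totalDegree ≤ 9 ∧ f.degreeOf 0 < 3 ∧
      f.degreeOf 1 < 9 ∧ ∀ x : ↥(A F), g x = MvPolynomial.eval (x : Fin 2 → F) f)
    (hg : g ≠ 0) : 2 ≤ Set.ncard {x | g x ≠ 0} := by
  obtain ⟨f, h9, h0, h1, hfg⟩ := hcode
  have hsum : ∑ z : ↥(A F), g z = 0 := by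
    rw [Finset.sum_congr rfl (fun z _ => hfg z)]
    exact sum_eval_zero hF f h9 h0 h1
  by_contra hlt
  push_neg at hlt
  have h01 : Set.ncard {x | g x ≠ 0} = 0 ∨ Set.ncard {x | g x ≠ 0} = 1 := by omega
  rcases h01 with h | h
  · have hempty : {x | g x ≠ 0} = ∅ := (Set.ncard_eq_zero (Set.toFinite _)).1 h
    apply hg
    funext z
    by_contra hz
    exact absurd (hempty ▸ (hz : z ∈ {x | g x ≠ 0})) (Set.notMem_empty z)
  · obtain ⟨a, ha⟩ := Set.ncard_eq_one.1 h
    have hga : g a ≠ 0 := by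
      have : a ∈ {x | g x ≠ 0} := by rw [ha]; rfl
      exact this
    apply hga
    have hsub : ∑ z ∈ ({a} : Finset ↥(A F)), g z = ∑ z : ↥(A F), g z := by
      refine Finset.sum_subset (Finset.subset_univ _) ?_
      intro z _ hz
      simp only [Finset.mem_singleton] at hz
      by_contra hgz
      have hmem : z ∈ {x | g x ≠ 0} := hgz
      rw [ha] at hmem
      exact hz hmem
    rw [← hsum, ← hsub, Finset.sum_singleton]

lemma part2 (hF : Fintype.card F = 9) :
    Set.ncard {g : ↥(A F) → F |
      (∃ f : MvPolynomial (Fin 2) F, f.totalDegree ≤ 9 ∧ f.degreeOf 0 < 3 ∧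
          f.degreeOf 1 < 9 ∧ ∀ x : ↥(A F), g x = MvPolynomial.eval (x : Fin 2 → F) f) ∧
      Set.ncard {x | g x ≠ 0} = 2} = 2808 := by
  let ε : ↥(A F) ≃ Fin 27 := Fintype.equivFinOfCardEq (cardA hF)
  rw [← range_Phi hF ε, ← Nat.card_coe_set_eq,
    Nat.card_range_of_injective (Phi_inj ε), Nat.card_eq_fintype_card,
    Fintype.card_prod, card_pairs, card_units hF]

end AC9aux

/-- For `A = F_3 × F_9 ⊆ F_9^2` (with `F_3` the prime subfield, i.e. the fixed points of
`x ↦ x^3`), the affine Cartesian code `AC_9(9, A)` has minimum distance `2` and exactly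
`2808` minimum weight codewords. -/
theorem AC9_example (F : Type*) [Field F] [Fintype F] (hF : Fintype.card F = 9) :
    (∀ g : ↥{x : Fin 2 → F | x 0 ^ 3 = x 0} → F,
      (∃ f : MvPolynomial (Fin 2) F, f.totalDegree ≤ 9 ∧ f.degreeOf 0 < 3 ∧
          f.degreeOf 1 < 9 ∧
          ∀ x : ↥{x : Fin 2 → F | x 0 ^ 3 = x 0},
            g x = MvPolynomial.eval (x : Fin 2 → F) f) →
      g ≠ 0 → 2 ≤ Set.ncard {x | g x ≠ 0}) ∧
    Set.ncard {g : ↥{x : Fin 2 → F | x 0 ^ 3 = x 0} → F |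
      (∃ f : MvPolynomial (Fin 2) F, f.totalDegree ≤ 9 ∧ f.degreeOf 0 < 3 ∧
          f.degreeOf 1 < 9 ∧
          ∀ x : ↥{x : Fin 2 → F | x 0 ^ 3 = x 0},
            g x = MvPolynomial.eval (x : Fin 2 → F) f) ∧
      Set.ncard {x | g x ≠ 0} = 2} = 2808 := by
  exact ⟨fun g hcode hg => AC9aux.part1 hF g hcode hg, AC9aux.part2 hF⟩
end
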